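/- arXiv:1009.1257 — 8 statements merged into one kernel-verified Lean document; each statement's English description precedes it below -/
import Mathlib

section
/- For every integer k ≥ 1, ũ_k is the unique solution of the k-th boundary value problem of the hierarchy among functions twice continuously differentiable up to the center: if v : [0, R] → ℝ is C² on [0, R], satisfies v''(r) + (m−1) η_w(r) v'(r) = −k ũ_{k−1}(r) for all r ∈ (0, R), and v(R) = 0, then v(r) = ũ_k(r) for all r ∈ [0, R]. -/
open Set MeasureTheory intervalIntegral Filter Topology

lemma model_wlin {R : ℝ} {w : ℝ → ℝ} (hR : 0 < R) (hw : ContDiff ℝ (⊤ : ℕ∞) w) (hw0 : w 0 = 0)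
    (hw'0 : deriv w 0 = 1) :
    ∃ δ, 0 < δ ∧ δ ≤ R ∧ ∀ t ∈ Ioc (0:ℝ) δ, t/2 ≤ w t ∧ w t ≤ 2*t := by
  have hd : HasDerivAt w 1 0 := by
    have := (hw.differentiable (by simp) 0).hasDerivAt
    rwa [hw'0] at this
  have hs : Tendsto (fun t => w t / t) (𝓝[>] (0:ℝ)) (𝓝 1) := by
    have h1 := hasDerivAt_iff_tendsto_slope.1 hd
    have h2 : Tendsto (slope w 0) (𝓝[>] (0:ℝ)) (𝓝 1) :=
      h1.mono_left (nhdsWithin_mono _ fun x hx => ne_of_gt hx)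
    refine h2.congr' ?_
    filter_upwards [self_mem_nhdsWithin] with t ht
    rw [slope_def_field, hw0]
    ring_nf
  rw [Metric.tendsto_nhdsWithin_nhds] at hs
  obtain ⟨δ0, hδ0, hball⟩ := hs (1/2) (by norm_num)
  refine ⟨min (δ0/2) R, by positivity, min_le_right _ _, ?_⟩
  rintro t ⟨ht0, htδ⟩
  have htδ0 : dist t 0 < δ0 := by
    rw [Real.dist_eq, sub_zero, abs_of_pos ht0]
    calc t ≤ min (δ0/2) R := htδ
    _ ≤ δ0/2 := min_le_left _ _
    _ < δ0 := by linarith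
  have := hball ht0 htδ0
  rw [Real.dist_eq] at this
  have h1 : 1/2 < w t / t := by
    have := abs_lt.1 this
    linarith [this.1]
  have h2 : w t / t < 3/2 := by
    have := abs_lt.1 this
    linarith [this.2]
  have h1' : t / 2 < w t := by
    have := (lt_div_iff₀ ht0).1 h1; linarith
  have h2' : w t < 3/2 * t := by
    have := (div_lt_iff₀ ht0).1 h2; linarith
  exact ⟨h1'.le, by linarith⟩

lemma div_le_div_of_nonneg_right' {a b c : ℝ} (h : a ≤ b) (hc : 0 < c) : a / c ≤ b / c := by
  gcongr

lemma gbound {R : ℝ} {w : ℝ → ℝ} {m : ℕ} (hm : 2 ≤ m) (hR : 0 < R) (hw : ContDiff ℝ (⊤ : ℕ∞) w)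
    (hw0 : w 0 = 0) (hw'0 : deriv w 0 = 1) (hwpos : ∀ r ∈ Ioc (0:ℝ) R, 0 < w r)
    {f : ℝ → ℝ} (hf : ContinuousOn f (Icc 0 R)) :
    ∃ M, ∀ t ∈ Ioc (0:ℝ) R,
      |(∫ τ in (0:ℝ)..t, w τ ^ (m-1) * f τ) / w t ^ (m-1)| ≤ M := by
  obtain ⟨δ, hδ0, hδR, hδ⟩ := model_wlin hR hw hw0 hw'0
  set W : ℝ → ℝ := fun t => w t ^ (m-1) with hW
  have hWc : Continuous W := (hw.continuous).pow _
  -- bound for f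
  obtain ⟨Mf, hMf⟩ := (isCompact_Icc (a := (0:ℝ)) (b := R)).exists_bound_of_continuousOn hf
  have hMf0 : 0 ≤ Mf := le_trans (norm_nonneg _) (hMf 0 ⟨le_rfl, hR.le⟩)
  -- bound for W
  obtain ⟨Cw, hCw⟩ := (isCompact_Icc (a := (0:ℝ)) (b := R)).exists_bound_of_continuousOn
    hWc.continuousOn
  have hCw0 : 0 ≤ Cw := le_trans (norm_nonneg _) (hCw 0 ⟨le_rfl, hR.le⟩)
  -- positive lower bound for W on [δ, R]
  obtain ⟨t0, ht0, hmin⟩ := (isCompact_Icc (a := δ) (b := R)).exists_isMinOn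
    (nonempty_Icc.2 hδR) hWc.continuousOn
  set ε : ℝ := W t0 with hε
  have hεpos : 0 < ε := pow_pos (hwpos t0 ⟨lt_of_lt_of_le hδ0 ht0.1, ht0.2⟩) _
  -- numerator bound on (0, R]
  have hnum : ∀ t ∈ Ioc (0:ℝ) R, |∫ τ in (0:ℝ)..t, W τ * f τ| ≤ Cw * Mf * t := by
    rintro t ⟨ht0', htR⟩
    have : ‖∫ τ in (0:ℝ)..t, W τ * f τ‖ ≤ Cw * Mf * |t - 0| := by
      apply intervalIntegral.norm_integral_le_of_norm_le_const
      rintro x hx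
      rw [uIoc_of_le ht0'.le] at hx
      have hx' : x ∈ Icc (0:ℝ) R := ⟨hx.1.le, hx.2.trans htR⟩
      calc ‖W x * f x‖ = ‖W x‖ * ‖f x‖ := norm_mul _ _
        _ ≤ Cw * Mf := mul_le_mul (hCw x hx') (hMf x hx') (norm_nonneg _) hCw0
    simpa [abs_of_pos ht0'] using this
  refine ⟨max (4^(m-1) * Mf * δ) (Cw * Mf * R / ε), ?_⟩
  rintro t ⟨ht0', htR⟩
  have hWt : 0 < W t := pow_pos (hwpos t ⟨ht0', htR⟩) _
  rw [abs_div, abs_of_pos hWt]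
  rcases le_or_gt t δ with hcase | hcase
  · -- small t
    refine le_trans ?_ (le_max_left _ _)
    have hnum2 : |∫ τ in (0:ℝ)..t, W τ * f τ| ≤ (2*t)^(m-1) * Mf * t := by
      have : ‖∫ τ in (0:ℝ)..t, W τ * f τ‖ ≤ ((2*t)^(m-1) * Mf) * |t - 0| := by
        apply intervalIntegral.norm_integral_le_of_norm_le_const
        rintro x hx
        rw [uIoc_of_le ht0'.le] at hx
        have hxδ : x ∈ Ioc (0:ℝ) δ := ⟨hx.1, hx.2.trans hcase⟩
        have hb := hδ x hxδ
        have hWb : W x ≤ (2*t)^(m-1) := by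
          apply pow_le_pow_left₀ (hwpos x ⟨hx.1, hx.2.trans htR⟩).le
          calc w x ≤ 2 * x := hb.2
            _ ≤ 2 * t := by linarith [hx.2]
        have hWx0 : 0 ≤ W x := (pow_pos (hwpos x ⟨hx.1, hx.2.trans htR⟩) _).le
        calc ‖W x * f x‖ = ‖W x‖ * ‖f x‖ := norm_mul _ _
          _ ≤ (2*t)^(m-1) * Mf := by
              apply mul_le_mul ?_ (hMf x ⟨hx.1.le, hx.2.trans htR⟩) (norm_nonneg _)
                (by positivity)
              rwa [Real.norm_eq_abs, abs_of_nonneg hWx0]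
      simpa [abs_of_pos ht0', mul_assoc] using this
    have hWlb : (t/2)^(m-1) ≤ W t := by
      apply pow_le_pow_left₀ (by linarith)
      exact (hδ t ⟨ht0', hcase⟩).1
    have hq : (2*t)^(m-1) * Mf * t / W t ≤ 4^(m-1) * Mf * t := by
      rw [div_le_iff₀ hWt]
      have key : (2*t)^(m-1) = 4^(m-1) * (t/2)^(m-1) := by
        rw [← mul_pow]; ring_nf
      rw [key]
      calc 4^(m-1) * (t/2)^(m-1) * Mf * t = (4^(m-1) * Mf * t) * (t/2)^(m-1) := by ring
        _ ≤ (4^(m-1) * Mf * t) * W t := by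
            apply mul_le_mul_of_nonneg_left hWlb (by positivity)
    calc |∫ τ in (0:ℝ)..t, W τ * f τ| / W t ≤ (2*t)^(m-1) * Mf * t / W t := by
          exact div_le_div_of_nonneg_right' hnum2 hWt
      _ ≤ 4^(m-1) * Mf * t := hq
      _ ≤ 4^(m-1) * Mf * δ := by
          apply mul_le_mul_of_nonneg_left hcase (by positivity)
  · -- large t
    refine le_trans ?_ (le_max_right _ _)
    have hWlb : ε ≤ W t := hmin ⟨hcase.le, htR⟩
    calc |∫ τ in (0:ℝ)..t, W τ * f τ| / W t ≤ (Cw * Mf * R) / W t := by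
          apply div_le_div_of_nonneg_right' ?_ hWt
          calc |∫ τ in (0:ℝ)..t, W τ * f τ| ≤ Cw * Mf * t := hnum t ⟨ht0', htR⟩
            _ ≤ Cw * Mf * R := by nlinarith [mul_nonneg hCw0 hMf0]
      _ ≤ Cw * Mf * R / ε := by
          apply div_le_div_of_nonneg_left (by positivity) hεpos hWlb

-- continuity of g on (0, R]
lemma gcont {R : ℝ} {w : ℝ → ℝ} {m : ℕ} (hR : 0 < R) (hw : ContDiff ℝ (⊤ : ℕ∞) w)
    (hwpos : ∀ r ∈ Ioc (0:ℝ) R, 0 < w r)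
    {f : ℝ → ℝ} (hf : ContinuousOn f (Icc 0 R)) :
    ContinuousOn (fun t => (∫ τ in (0:ℝ)..t, w τ ^ (m-1) * f τ) / w t ^ (m-1))
      (Ioc (0:ℝ) R) := by
  have hWc : Continuous (fun t => w t ^ (m-1)) := (hw.continuous).pow _
  have hWfint : IntegrableOn (fun τ => w τ ^ (m-1) * f τ) (uIcc (0:ℝ) R) := by
    rw [uIcc_of_le hR.le]
    exact ((hWc.continuousOn).mul hf).integrableOn_Icc
  have hN : ContinuousOn (fun t => ∫ τ in (0:ℝ)..t, w τ ^ (m-1) * f τ) (uIcc (0:ℝ) R) :=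
    intervalIntegral.continuousOn_primitive_interval hWfint
  rw [uIcc_of_le hR.le] at hN
  apply ContinuousOn.div (hN.mono Ioc_subset_Icc_self) (hWc.continuousOn)
  intro t ht
  exact (pow_pos (hwpos t ht) _).ne'


-- integrability of g on [0, R]
lemma gint {R : ℝ} {w : ℝ → ℝ} {m : ℕ} (hm : 2 ≤ m) (hR : 0 < R) (hw : ContDiff ℝ (⊤ : ℕ∞) w)
    (hw0 : w 0 = 0) (hw'0 : deriv w 0 = 1) (hwpos : ∀ r ∈ Ioc (0:ℝ) R, 0 < w r)
    {f : ℝ → ℝ} (hf : ContinuousOn f (Icc 0 R)) :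
    IntegrableOn (fun t => (∫ τ in (0:ℝ)..t, w τ ^ (m-1) * f τ) / w t ^ (m-1))
      (Icc (0:ℝ) R) := by
  rw [integrableOn_Icc_iff_integrableOn_Ioc]
  obtain ⟨M, hM⟩ := gbound hm hR hw hw0 hw'0 hwpos hf
  have hmeas' : AEStronglyMeasurable
      (fun t => (∫ τ in (0:ℝ)..t, w τ ^ (m-1) * f τ) / w t ^ (m-1))
      (volume.restrict (Ioc (0:ℝ) R)) :=
    (gcont hR hw hwpos hf).aestronglyMeasurable measurableSet_Ioc
  apply Integrable.mono' (integrable_const M) hmeas'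
  rw [ae_restrict_iff' measurableSet_Ioc]
  exact ae_of_all _ fun t ht => hM t ht


-- continuity of r ↦ ∫_r^R g on [0, R]
lemma cont_int {R : ℝ} (hR : 0 < R) {g : ℝ → ℝ} (hg : IntegrableOn g (Icc (0:ℝ) R)) :
    ContinuousOn (fun r => ∫ t in r..R, g t) (Icc (0:ℝ) R) := by
  have hprim : ContinuousOn (fun r => ∫ t in (0:ℝ)..r, g t) (Icc (0:ℝ) R) := by
    have := intervalIntegral.continuousOn_primitive_interval
      (f := g) (μ := volume) (a := (0:ℝ)) (b := R) (by rwa [uIcc_of_le hR.le])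
    rwa [uIcc_of_le hR.le] at this
  have heq : ∀ r ∈ Icc (0:ℝ) R,
      (∫ t in r..R, g t) = (∫ t in (0:ℝ)..R, g t) - ∫ t in (0:ℝ)..r, g t := by
    intro r hr
    have h1 : IntervalIntegrable g volume 0 r := by
      rw [intervalIntegrable_iff_integrableOn_Ioc_of_le hr.1]
      exact hg.mono_set (Ioc_subset_Icc_self.trans (Icc_subset_Icc le_rfl hr.2))
    have h2 : IntervalIntegrable g volume r R := by
      rw [intervalIntegrable_iff_integrableOn_Ioc_of_le hr.2]
      exact hg.mono_set (Ioc_subset_Icc_self.trans (Icc_subset_Icc hr.1 le_rfl))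
    rw [eq_sub_iff_add_eq]
    rw [add_comm]
    exact intervalIntegral.integral_add_adjacent_intervals h1 h2
  exact (continuousOn_const.sub hprim).congr heq

/-- Uniqueness in the exit moment hierarchy (maximum principle):
for `k ≥ 1`, any function `v` which is C² on `[0,R]`, satisfies
`v'' + (m-1) η_w v' = -k ũ_{k-1}` on `(0,R)` and `v(R) = 0`, coincides with
`ũ_k` on `[0,R]`. -/
theorem model_exit_moment_unique
    (m : ℕ) (hm : 2 ≤ m) (R : ℝ) (hR : 0 < R)
    (w : ℝ → ℝ) (hw : ContDiff ℝ (⊤ : ℕ∞) w) (hw0 : w 0 = 0)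
    (hw'0 : deriv w 0 = 1) (hwpos : ∀ r ∈ Set.Ioc (0 : ℝ) R, 0 < w r)
    (u : ℕ → ℝ → ℝ) (hu0 : ∀ r : ℝ, u 0 r = 1)
    (hurec : ∀ (k : ℕ) (r : ℝ), u (k + 1) r =
      ((k : ℝ) + 1) *
        ∫ t in r..R, (∫ τ in (0 : ℝ)..t, w τ ^ (m - 1) * u k τ) / w t ^ (m - 1)) :
    ∀ k : ℕ, 1 ≤ k → ∀ v : ℝ → ℝ,
      ContDiffOn ℝ 2 v (Set.Icc (0 : ℝ) R) →
      (∀ r ∈ Set.Ioo (0 : ℝ) R,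
        deriv (deriv v) r + ((m : ℝ) - 1) * (deriv w r / w r) * deriv v r =
          -(k : ℝ) * u (k - 1) r) →
      v R = 0 →
      ∀ r ∈ Set.Icc (0 : ℝ) R, v r = u k r := by
  -- continuity of each u j on [0, R]
  have hucont : ∀ j : ℕ, ContinuousOn (u j) (Icc (0:ℝ) R) := by
    intro j
    induction j with
    | zero => exact continuousOn_const.congr fun r _ => hu0 r
    | succ i ih =>
      have hgi := gint hm hR hw hw0 hw'0 hwpos ih
      exact (continuousOn_const.mul (cont_int hR hgi)).congr fun r _ => hurec i r
  intro k hk v hv hode hvR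
  set j := k - 1 with hj
  have hkj : j + 1 = k := Nat.succ_pred_eq_of_pos hk
  have hfc : ContinuousOn (u j) (Icc (0:ℝ) R) := hucont j
  have hgint := gint hm hR hw hw0 hw'0 hwpos hfc
  set W : ℝ → ℝ := fun t => w t ^ (m-1) with hWdef
  set N : ℝ → ℝ := fun t => ∫ τ in (0:ℝ)..t, W τ * u j τ with hNdef
  set g : ℝ → ℝ := fun t => N t / W t with hgdef
  have hIooIcc : Ioo (0:ℝ) R ⊆ Icc 0 R := Ioo_subset_Icc_self
  have hmemnhds : ∀ t ∈ Ioo (0:ℝ) R, Icc (0:ℝ) R ∈ 𝓝 t := fun t ht =>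
    Icc_mem_nhds ht.1 ht.2
  -- derivative facts for v
  have hvdiff : DifferentiableOn ℝ v (Icc (0:ℝ) R) := hv.differentiableOn two_ne_zero
  have hvd : ∀ t ∈ Ioo (0:ℝ) R, HasDerivAt v (deriv v t) t := fun t ht =>
    ((hvdiff t (hIooIcc ht)).differentiableAt (hmemnhds t ht)).hasDerivAt
  have hdv1 : ContDiffOn ℝ 1 (deriv v) (Ioo (0:ℝ) R) :=
    (hv.mono hIooIcc).deriv_of_isOpen isOpen_Ioo (by norm_num)
  have hvdd : ∀ t ∈ Ioo (0:ℝ) R, HasDerivAt (deriv v) (deriv (deriv v) t) t := fun t ht =>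
    (((hdv1.differentiableOn one_ne_zero) t ht).differentiableAt (isOpen_Ioo.mem_nhds ht)).hasDerivAt
  -- derivative of W
  have hWd : ∀ t : ℝ, HasDerivAt W (((m-1:ℕ):ℝ) * w t ^ (m-2) * deriv w t) t := by
    intro t
    have h := ((hw.differentiable (by simp) t).hasDerivAt).pow (m-1)
    have h2 : m - 1 - 1 = m - 2 := by omega
    rwa [h2] at h
  -- derivative of N
  have hWfc : ContinuousOn (fun τ => W τ * u j τ) (Icc (0:ℝ) R) :=
    ((hw.continuous.pow _).continuousOn).mul hfc
  have hNd : ∀ t ∈ Ioo (0:ℝ) R, HasDerivAt N (W t * u j t) t := by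
    intro t ht
    apply intervalIntegral.integral_hasDerivAt_right
    · rw [intervalIntegrable_iff_integrableOn_Ioc_of_le ht.1.le]
      exact (hWfc.mono (Icc_subset_Icc le_rfl ht.2.le)).integrableOn_Icc.mono_set
        Ioc_subset_Icc_self
    · exact ContinuousOn.stronglyMeasurableAtFilter isOpen_Ioo (hWfc.mono hIooIcc) t ht
    · exact (hWfc t (hIooIcc ht)).continuousAt (hmemnhds t ht)
  set F : ℝ → ℝ := fun t => W t * deriv v t + (k:ℝ) * N t with hFdef
  have hFd : ∀ t ∈ Ioo (0:ℝ) R, HasDerivAt F 0 t := by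
    intro t ht
    have hwt : 0 < w t := hwpos t ⟨ht.1, ht.2.le⟩
    have h1 : HasDerivAt F _ t := ((hWd t).mul (hvdd t ht)).add ((hNd t ht).const_mul ((k:ℝ)))
    convert h1 using 1
    have hv'' : deriv (deriv v) t =
        -(k:ℝ) * u j t - ((m:ℝ)-1) * (deriv w t / w t) * deriv v t := by
      linarith [hode t ht]
    have hm1 : ((m-1:ℕ):ℝ) = (m:ℝ) - 1 := by
      push_cast [Nat.cast_sub (by omega : 1 ≤ m)]; ring
    have hpow : w t ^ (m-1) = w t ^ (m-2) * w t := by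
      rw [← pow_succ]; congr 1; omega
    show (0:ℝ) = _
    rw [hv'', hm1]
    simp only [hWdef, hpow]
    field_simp
    ring
  -- F is constant on Ioo 0 R
  have hconst : ∀ s t : ℝ, s ∈ Ioo (0:ℝ) R → t ∈ Ioo (0:ℝ) R → s ≤ t → F s = F t := by
    intro s t hs ht hst
    have h := intervalIntegral.integral_eq_sub_of_hasDerivAt (f := F)
      (f' := fun _ => (0:ℝ)) (a := s) (b := t) (fun x hx => by
        rw [uIcc_of_le hst] at hx
        exact hFd x ⟨lt_of_lt_of_le hs.1 hx.1, lt_of_le_of_lt hx.2 ht.2⟩)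
      intervalIntegrable_const
    simp only [intervalIntegral.integral_const, smul_zero, smul_eq_mul, mul_zero] at h
    linarith [h]
  -- limit of F at 0+
  haveI hne : (𝓝[Ioo (0:ℝ) R] (0:ℝ)).NeBot := by
    apply mem_closure_iff_nhdsWithin_neBot.1
    rw [closure_Ioo hR.ne]
    exact ⟨le_rfl, hR.le⟩
  have hdvc : ContinuousOn (derivWithin v (Icc (0:ℝ) R)) (Icc (0:ℝ) R) :=
    hv.continuousOn_derivWithin (uniqueDiffOn_Icc hR) (by norm_num)
  have hdveq : ∀ t ∈ Ioo (0:ℝ) R, deriv v t = derivWithin v (Icc (0:ℝ) R) t := fun t ht =>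
    (derivWithin_of_mem_nhds (hmemnhds t ht)).symm
  have hNc : ContinuousOn N (Icc (0:ℝ) R) := by
    have := intervalIntegral.continuousOn_primitive_interval (μ := volume) (a := (0:ℝ))
      (b := R) (f := fun τ => W τ * u j τ)
      (by rw [uIcc_of_le hR.le]; exact hWfc.integrableOn_Icc)
    rwa [uIcc_of_le hR.le] at this
  have hGc : ContinuousOn (fun s => W s * derivWithin v (Icc (0:ℝ) R) s + (k:ℝ) * N s)
      (Icc (0:ℝ) R) :=
    (((hw.continuous.pow _).continuousOn).mul hdvc).add (continuousOn_const.mul hNc)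
  have hG0 : W 0 * derivWithin v (Icc (0:ℝ) R) 0 + (k:ℝ) * N 0 = 0 := by
    have hW0 : W 0 = 0 := by
      simp only [hWdef, hw0]
      exact zero_pow (by omega)
    have hN0 : N 0 = 0 := intervalIntegral.integral_same
    rw [hW0, hN0]; ring
  have htend : Tendsto F (𝓝[Ioo (0:ℝ) R] 0) (𝓝 0) := by
    have h1 : Tendsto (fun s => W s * derivWithin v (Icc (0:ℝ) R) s + (k:ℝ) * N s)
        (𝓝[Icc (0:ℝ) R] 0) (𝓝 0) := by
      have := hGc 0 ⟨le_rfl, hR.le⟩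
      rw [ContinuousWithinAt, hG0] at this
      exact this
    have h2 := h1.mono_left (nhdsWithin_mono _ hIooIcc)
    refine h2.congr' ?_
    filter_upwards [self_mem_nhdsWithin] with s hs
    simp only [hFdef, hdveq s hs]
  have hF0 : ∀ r ∈ Ioo (0:ℝ) R, F r = 0 := by
    intro r hr
    have hev : F =ᶠ[𝓝[Ioo (0:ℝ) R] 0] fun _ => F r := by
      filter_upwards [self_mem_nhdsWithin,
        mem_nhdsWithin_of_mem_nhds (Iio_mem_nhds hr.1)] with s hs hsr
      exact hconst s r hs hr (le_of_lt hsr)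
    exact (tendsto_nhds_unique (htend.congr' hev) tendsto_const_nhds).symm
  -- formula for deriv v
  have hdvf : ∀ t ∈ Ioo (0:ℝ) R, deriv v t = -(k:ℝ) * g t := by
    intro t ht
    have h := hF0 t ht
    have hWt : 0 < W t := pow_pos (hwpos t ⟨ht.1, ht.2.le⟩) _
    simp only [hFdef] at h
    simp only [hgdef]
    rw [← mul_div_assoc, eq_div_iff hWt.ne']
    linarith
  -- FTC on [r, R]
  intro r hr
  have hgint' : IntervalIntegrable g volume r R := by
    rw [intervalIntegrable_iff_integrableOn_Ioc_of_le hr.2]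
    exact hgint.mono_set (fun x hx => ⟨lt_of_le_of_lt hr.1 hx.1 |>.le, hx.2⟩)
  have hint : IntervalIntegrable (fun t => -(k:ℝ) * g t) volume r R :=
    hgint'.const_mul _
  have hFTC := intervalIntegral.integral_eq_sub_of_hasDeriv_right_of_le hr.2
    (hv.continuousOn.mono (Icc_subset_Icc hr.1 le_rfl))
    (fun x hx => by
      have hx' : x ∈ Ioo (0:ℝ) R := ⟨lt_of_le_of_lt hr.1 hx.1, hx.2⟩
      have h := hvd x hx'
      rw [hdvf x hx'] at h
      exact h.hasDerivWithinAt)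
    hint
  rw [hvR, intervalIntegral.integral_const_mul] at hFTC
  have hvr : v r = (k:ℝ) * ∫ t in r..R, g t := by linarith
  have hkval : u k r = (k:ℝ) * ∫ t in r..R, g t := by
    have h := hurec j r
    rw [hkj] at h
    rw [h]
    congr 1
    have : ((j:ℝ) + 1) = ((j+1 : ℕ) : ℝ) := by push_cast; ring
    rw [this, hkj]
  rw [hvr, hkval]
end

section
/- If w is convex on (0, R) (i.e. w''(r) ≥ 0 there, so that the model space M^m_w has nonpositive radial sectional curvature −w''/w), then q_w(r) η_w(r) ≥ 1/m for all r ∈ (0, R], i.e. M^m_w is w-balanced. If moreover w''(r) > 0 for all r ∈ (0, R) (negatively curved model), then the inequality is strict: q_w(r) η_w(r) > 1/m for all r ∈ (0, R], i.e. M^m_w is strictly w-balanced. -/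
/-- If the warping function `w` is convex on `(0,R)` (nonpositive
radial curvature `-w''/w`), then the model space `M^m_w` is `w`-balanced:
`q_w(r) η_w(r) ≥ 1/m` on `(0,R]`, where `q_w(r) = (∫_0^r w^{m-1})/w(r)^{m-1}`
and `η_w = w'/w`. If moreover `w'' > 0` on `(0,R)` (negatively curved model),
then the balance condition is strict: `q_w(r) η_w(r) > 1/m` on `(0,R]`. -/
theorem model_balance_of_convexity
    (m : ℕ) (hm : 2 ≤ m) (R : ℝ) (hR : 0 < R)
    (w : ℝ → ℝ) (hw : ContDiff ℝ (⊤ : ℕ∞) w) (hw0 : w 0 = 0)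
    (hw'0 : deriv w 0 = 1) (hwpos : ∀ r ∈ Set.Ioc (0 : ℝ) R, 0 < w r)
    (hconv : ∀ r ∈ Set.Ioo (0 : ℝ) R, 0 ≤ deriv (deriv w) r) :
    (∀ r ∈ Set.Ioc (0 : ℝ) R,
      1 / (m : ℝ) ≤
        (∫ t in (0 : ℝ)..r, w t ^ (m - 1)) / w r ^ (m - 1) * (deriv w r / w r)) ∧
    ((∀ r ∈ Set.Ioo (0 : ℝ) R, 0 < deriv (deriv w) r) →
      ∀ r ∈ Set.Ioc (0 : ℝ) R,
        1 / (m : ℝ) <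
          (∫ t in (0 : ℝ)..r, w t ^ (m - 1)) / w r ^ (m - 1) * (deriv w r / w r)) := by
  have hmR : (0:ℝ) < m := by positivity
  set I : ℝ → ℝ := fun r => ∫ t in (0:ℝ)..r, w t ^ (m - 1) with hIdef
  set F : ℝ → ℝ := fun r => I r * deriv w r - w r ^ m / m with hFdef
  have hwc : Continuous w := hw.continuous
  have hwpc : Continuous (fun t => w t ^ (m - 1)) := hwc.pow _
  have hw2 : ContDiff ℝ ((⊤ : ℕ∞) : WithTop ℕ∞) w := hw.of_le (by simp)
  have hw' : ContDiff ℝ ((⊤ : ℕ∞) : WithTop ℕ∞) (deriv w) := (contDiff_infty_iff_deriv.mp hw2).2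
  have hdw : ∀ r, HasDerivAt w (deriv w r) r :=
    fun r => (hw.differentiable (by simp) r).hasDerivAt
  have hdw' : ∀ r, HasDerivAt (deriv w) (deriv (deriv w) r) r :=
    fun r => (hw'.differentiable (by simp) r).hasDerivAt
  have hI : ∀ r, HasDerivAt I (w r ^ (m - 1)) r := fun r =>
    (hwpc.integral_hasStrictDerivAt 0 r).hasDerivAt
  have hF : ∀ r, HasDerivAt F (I r * deriv (deriv w) r) r := by
    intro r
    have h1 := (hI r).mul (hdw' r)
    have h2 := ((hdw r).pow m).div_const (m : ℝ)
    have h : HasDerivAt F _ r := h1.sub h2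
    convert h using 1
    field_simp
    ring
  have hF0 : F 0 = 0 := by
    simp [hFdef, hIdef, intervalIntegral.integral_same, hw0,
      zero_pow (by omega : m ≠ 0)]
  have hFc : ContinuousOn F (Set.Icc 0 R) :=
    fun x _ => ((hF x).continuousAt).continuousWithinAt
  have hInonneg : ∀ x ∈ Set.Ioo (0:ℝ) R, 0 ≤ I x := by
    intro x hx
    apply intervalIntegral.integral_nonneg hx.1.le
    intro t ht
    rcases eq_or_lt_of_le ht.1 with h | h
    · simp [← h, hw0, zero_pow (by omega : m - 1 ≠ 0)]
    · exact (pow_pos (hwpos t ⟨h, ht.2.trans hx.2.le⟩) _).le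
  have hIpos : ∀ x ∈ Set.Ioo (0:ℝ) R, 0 < I x := by
    intro x hx
    apply intervalIntegral.intervalIntegral_pos_of_pos_on
      (hwpc.intervalIntegrable 0 x)
      (fun t ht => pow_pos (hwpos t ⟨ht.1, ht.2.le.trans hx.2.le⟩) _) hx.1
  -- conversion from F r ≥ 0 (resp. > 0) to the stated inequality
  have key : ∀ r ∈ Set.Ioc (0:ℝ) R,
      (0 ≤ F r → 1 / (m : ℝ) ≤ I r / w r ^ (m - 1) * (deriv w r / w r)) ∧
      (0 < F r → 1 / (m : ℝ) < I r / w r ^ (m - 1) * (deriv w r / w r)) := by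
    intro r hr
    have hwr : 0 < w r := hwpos r hr
    have hpow : (0:ℝ) < w r ^ (m - 1) * w r := by positivity
    have hmeq : w r ^ m = w r ^ (m - 1) * w r := by
      rw [← pow_succ]
      congr 1
      omega
    constructor
    · intro hFr
      rw [div_mul_div_comm, le_div_iff₀ hpow]
      have : w r ^ m / m ≤ I r * deriv w r := by
        simp only [hFdef] at hFr; linarith
      calc 1 / (m:ℝ) * (w r ^ (m-1) * w r) = w r ^ m / m := by rw [hmeq]; ring
        _ ≤ I r * deriv w r := this
    · intro hFr
      rw [div_mul_div_comm, lt_div_iff₀ hpow]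
      have : w r ^ m / m < I r * deriv w r := by
        simp only [hFdef] at hFr; linarith
      calc 1 / (m:ℝ) * (w r ^ (m-1) * w r) = w r ^ m / m := by rw [hmeq]; ring
        _ < I r * deriv w r := this
  constructor
  · -- nonstrict case
    have hmono : MonotoneOn F (Set.Icc 0 R) := by
      apply monotoneOn_of_deriv_nonneg (convex_Icc 0 R) hFc
      · intro x hx
        exact ((hF x).differentiableAt).differentiableWithinAt
      · intro x hx
        rw [interior_Icc] at hx
        rw [(hF x).deriv]
        exact mul_nonneg (hInonneg x hx) (hconv x hx)
    intro r hr
    have hFr : 0 ≤ F r := by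
      have := hmono (Set.left_mem_Icc.mpr hR.le) ⟨hr.1.le, hr.2⟩ hr.1.le
      rw [hF0] at this; exact this
    exact (key r hr).1 hFr
  · -- strict case
    intro hconv' r hr
    have hmono : StrictMonoOn F (Set.Icc 0 R) := by
      apply strictMonoOn_of_deriv_pos (convex_Icc 0 R) hFc
      intro x hx
      rw [interior_Icc] at hx
      rw [(hF x).deriv]
      exact mul_pos (hIpos x hx) (hconv' x hx)
    have hFr : 0 < F r := by
      have := hmono (Set.left_mem_Icc.mpr hR.le) ⟨hr.1.le, hr.2⟩ hr.1
      rw [hF0] at this; exact this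
    exact (key r hr).2 hFr
end

section
/- For every integer m ≥ 2, every real a > 0 and every r > 0: m · a · cosh(a r) · ∫_0^r sinh^{m−1}(a t) dt > sinh^m(a r). Equivalently, the hyperbolic space ℍ^m(b) of constant curvature b = −a² < 0, viewed as the model space with warping function w(r) = sinh(a r)/a, satisfies the strict balance condition q_w(r) η_w(r) > 1/m for all r > 0, where η_w = w'/w and q_w(r) = (∫_0^r w^{m−1} dt)/w(r)^{m−1}. -/
/-!
Since `w 0 = 0`, the fundamental theorem of calculus gives `w r ^ m = ∫₀ʳ m w^{m-1} w'`. If `w'` is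
strictly increasing and `w > 0` on `(0, r]`, replacing `w' t` by `w' r` strictly increases the
integral, so `w r ^ m < m w'(r) ∫₀ʳ w^{m-1}`, which is the balance inequality `q_w η_w > 1/m`.
For hyperbolic space `w' = cosh (a ·)` is strictly increasing on `[0, ∞)`.
-/

open Real Set intervalIntegral

section ConvexWarping

variable {f f' : ℝ → ℝ} {r : ℝ} {m : ℕ}

theorem integral_pow_mul_deriv_eq_pow (hm : m ≠ 0) (hr : 0 ≤ r)
    (hf : ∀ t ∈ Icc 0 r, HasDerivAt f (f' t) t) (hf'c : ContinuousOn f' (Icc 0 r))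
    (hf0 : f 0 = 0) :
    ∫ t in (0 : ℝ)..r, (m : ℝ) * f t ^ (m - 1) * f' t = f r ^ m := by
  have hfc : ContinuousOn f (Icc 0 r) := fun t ht => (hf t ht).continuousAt.continuousWithinAt
  rw [integral_eq_sub_of_hasDerivAt (f := fun t => f t ^ m)
    (fun t ht => (hf t (uIcc_of_le hr ▸ ht)).pow m)
    (((hfc.pow (m - 1)).const_smul (m : ℝ)).mul hf'c |>.intervalIntegrable_of_Icc hr)]
  simp [hf0, hm]

theorem pow_lt_mul_deriv_mul_integral_pow (hm : m ≠ 0) (hr : 0 < r)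
    (hf : ∀ t ∈ Icc 0 r, HasDerivAt f (f' t) t) (hf'c : ContinuousOn f' (Icc 0 r))
    (hf' : StrictMonoOn f' (Icc 0 r)) (hf0 : f 0 = 0) (hfpos : ∀ t ∈ Ioc 0 r, 0 < f t) :
    f r ^ m < m * f' r * ∫ t in (0 : ℝ)..r, f t ^ (m - 1) := by
  have hfc : ContinuousOn f (Icc 0 r) := fun t ht => (hf t ht).continuousAt.continuousWithinAt
  have hm₀ : (0 : ℝ) < m := by positivity
  have hr_mem : r ∈ Icc 0 r := right_mem_Icc.2 hr.le
  rw [← integral_pow_mul_deriv_eq_pow hm hr.le hf hf'c hf0, ← integral_const_mul]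
  refine integral_lt_integral_of_continuousOn_of_le_of_exists_lt hr
    (((hfc.pow (m - 1)).const_smul (m : ℝ)).mul hf'c)
    (continuousOn_const.mul (hfc.pow (m - 1))) (fun t ht => ?_) ⟨r / 2, ?_, ?_⟩
  · rw [mul_right_comm _ (f' r)]
    have hft := (hfpos t ht).le
    gcongr
    exact hf'.monotoneOn (Ioc_subset_Icc_self ht) hr_mem ht.2
  · exact ⟨by positivity, by linarith⟩
  · have hc : r / 2 ∈ Ioc 0 r := ⟨by positivity, by linarith⟩
    rw [mul_right_comm _ (f' r)]
    exact mul_lt_mul_of_pos_left (hf' (Ioc_subset_Icc_self hc) hr_mem (by linarith))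
      (mul_pos hm₀ (pow_pos (hfpos _ hc) _))

/-- The paper's `q_w(r)`, the ratio of the volume of the geodesic ball of radius `r` to the area
of its boundary sphere; the paper's `η_w` is `logDeriv w`. -/
noncomputable def volumeToAreaRatio (m : ℕ) (w : ℝ → ℝ) (r : ℝ) : ℝ :=
  (∫ t in (0 : ℝ)..r, w t ^ (m - 1)) / w r ^ (m - 1)

theorem one_div_lt_volumeToAreaRatio_mul_logDeriv (hm : m ≠ 0) (hr : 0 < r)
    (hf : ∀ t ∈ Icc 0 r, HasDerivAt f (f' t) t) (hf'c : ContinuousOn f' (Icc 0 r))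
    (hf' : StrictMonoOn f' (Icc 0 r)) (hf0 : f 0 = 0) (hfpos : ∀ t ∈ Ioc 0 r, 0 < f t) :
    1 / (m : ℝ) < volumeToAreaRatio m f r * logDeriv f r := by
  have hbal := pow_lt_mul_deriv_mul_integral_pow hm hr hf hf'c hf' hf0 hfpos
  have hfr := hfpos r (right_mem_Ioc.2 hr)
  rw [volumeToAreaRatio, logDeriv_apply, (hf r (right_mem_Icc.2 hr.le)).deriv,
    div_mul_div_comm, ← pow_succ, Nat.sub_add_cancel (Nat.one_le_iff_ne_zero.2 hm),
    lt_div_iff₀ (by positivity), one_div_mul_eq_div, div_lt_iff₀ (by positivity)]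
  linarith

end ConvexWarping

theorem hasDerivAt_sinh_mul (a t : ℝ) :
    HasDerivAt (fun x => sinh (a * x)) (a * cosh (a * t)) t := by
  have := (hasDerivAt_sinh (a * t)).comp t ((hasDerivAt_id t).const_mul a)
  rwa [mul_one, mul_comm] at this

theorem strictMonoOn_cosh_mul {a : ℝ} (ha : 0 < a) :
    StrictMonoOn (fun t => cosh (a * t)) (Ici 0) :=
  cosh_strictMonoOn.comp ((strictMono_mul_left_of_pos ha).strictMonoOn _)
    fun _ ht => mul_nonneg ha.le ht

/-- For every integer `m ≥ 2`, `a > 0` and `r > 0`,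
`m · a · cosh(ar) · ∫_0^r sinh^{m-1}(at) dt > sinh^m(ar)`; equivalently, the
hyperbolic space `ℍ^m(-a²)`, i.e. the model space with warping function
`w(r) = sinh(ar)/a`, satisfies the strict balance condition
`q_w(r) η_w(r) > 1/m` for all `r > 0`. -/
theorem hyperbolic_space_strictly_balanced :
    ∀ m : ℕ, 2 ≤ m → ∀ a : ℝ, 0 < a → ∀ r : ℝ, 0 < r →
      Real.sinh (a * r) ^ m <
        (m : ℝ) * a * Real.cosh (a * r) *
          ∫ t in (0 : ℝ)..r, Real.sinh (a * t) ^ (m - 1) ∧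
      1 / (m : ℝ) <
        ((∫ t in (0 : ℝ)..r, (Real.sinh (a * t) / a) ^ (m - 1)) /
            (Real.sinh (a * r) / a) ^ (m - 1)) *
          (deriv (fun x : ℝ => Real.sinh (a * x) / a) r / (Real.sinh (a * r) / a)) := by
  intro m hm a ha r hr
  have hm₀ : m ≠ 0 := by omega
  have hcosh : StrictMonoOn (fun t => cosh (a * t)) (Icc 0 r) :=
    (strictMonoOn_cosh_mul ha).mono Icc_subset_Ici_self
  have hsinh_pos : ∀ t ∈ Ioc 0 r, 0 < sinh (a * t) := fun t ht =>
    sinh_pos_iff.2 (mul_pos ha ht.1)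
  constructor
  · rw [mul_assoc (m : ℝ)]
    exact pow_lt_mul_deriv_mul_integral_pow hm₀ hr (fun t _ => hasDerivAt_sinh_mul a t)
      (by fun_prop) (fun s hs t ht hst => mul_lt_mul_of_pos_left (hcosh hs ht hst) ha)
      (by simp) hsinh_pos
  · exact one_div_lt_volumeToAreaRatio_mul_logDeriv hm₀ hr
      (fun t _ => by simpa [ha.ne'] using (hasDerivAt_sinh_mul a t).div_const a)
      (by fun_prop) hcosh (by simp) fun t ht => div_pos (hsinh_pos t ht) ha
end

section
/- For every integer k ≥ 1 and every r ∈ (0, R): g(r)² ( f_k''(r) − f_k'(r) η_w(r) ) = −k f_{k−1}(r) − m ( η_w(r) − h(r) ) f_k'(r). -/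
open Set Filter MeasureTheory Topology


/-- For the transplanted exit moment functions `f_k = ũ^W_k ∘ s`
of the isoperimetric comparison space `C^m_{w,g,h}`, one has for every `k ≥ 1`
and every `r ∈ (0,R)`:
`g(r)² (f_k''(r) - f_k'(r) η_w(r)) = -k f_{k-1}(r) - m (η_w(r) - h(r)) f_k'(r)`. -/
theorem comparison_space_transplanted_identity
    (m : ℕ) (hm : 2 ≤ m) (R : ℝ) (hR : 0 < R)
    (w : ℝ → ℝ) (hw : ContDiff ℝ (⊤ : ℕ∞) w) (hw0 : w 0 = 0)
    (hw'0 : deriv w 0 = 1) (hwpos : ∀ r ∈ Set.Ioc (0 : ℝ) R, 0 < w r)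
    (g : ℝ → ℝ) (hg : ContDiff ℝ (⊤ : ℕ∞) g) (hg0 : g 0 = 1)
    (hgpos : ∀ r ∈ Set.Icc (0 : ℝ) R, 0 < g r)
    (hgle : ∀ r ∈ Set.Icc (0 : ℝ) R, g r ≤ 1)
    (h : ℝ → ℝ) (hh : ContDiff ℝ (⊤ : ℕ∞) h)
    (s : ℝ → ℝ) (hs : ∀ r : ℝ, s r = ∫ t in (0 : ℝ)..r, 1 / g t)
    (ρ : ℝ → ℝ) (hρs : ∀ r ∈ Set.Icc (0 : ℝ) R, ρ (s r) = r)
    (hsρ : ∀ σ ∈ Set.Icc (0 : ℝ) (s R), s (ρ σ) = σ ∧ ρ σ ∈ Set.Icc (0 : ℝ) R)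
    (Λ : ℝ → ℝ) (hΛpos : ∀ r ∈ Set.Ioc (0 : ℝ) R, 0 < Λ r)
    (hΛC1 : ContDiffOn ℝ 1 Λ (Set.Ioc (0 : ℝ) R))
    (hΛode : ∀ r ∈ Set.Ioc (0 : ℝ) R,
      HasDerivWithinAt (fun t => Λ t * w t * g t)
        ((m : ℝ) * (Λ r / g r) * (deriv w r - h r * w r)) (Set.Ioc (0 : ℝ) R) r)
    (hΛnorm : Filter.Tendsto (fun r => Λ r / r ^ (m - 1))
      (nhdsWithin (0 : ℝ) (Set.Ioi 0)) (nhds 1))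
    (W : ℝ → ℝ) (hW0 : W 0 = 0)
    (hWdef : ∀ σ ∈ Set.Ioc (0 : ℝ) (s R), W σ = Λ (ρ σ) ^ (((m : ℝ) - 1)⁻¹))
(hWsmooth : ContDiffOn ℝ (⊤ : ℕ∞) W (Set.Icc (0 : ℝ) (s R)))
    (hW'0 : derivWithin W (Set.Icc (0 : ℝ) (s R)) 0 = 1)
(uW : ℕ → ℝ → ℝ) (huW0 : ∀ σ : ℝ, uW 0 σ = 1)
    (huWrec : ∀ (k : ℕ) (σ : ℝ), uW (k + 1) σ =
      ((k : ℝ) + 1) *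
        ∫ t in σ..(s R), (∫ τ in (0 : ℝ)..t, W τ ^ (m - 1) * uW k τ) / W t ^ (m - 1))
    (f : ℕ → ℝ → ℝ) (hf : ∀ (k : ℕ) (r : ℝ), f k r = uW k (s r)) :
    ∀ k : ℕ, 1 ≤ k → ∀ r ∈ Set.Ioo (0 : ℝ) R,
      g r ^ 2 * (deriv (deriv (f k)) r - deriv (f k) r * (deriv w r / w r)) =
        -(k : ℝ) * f (k - 1) r -
          (m : ℝ) * (deriv w r / w r - h r) * deriv (f k) r := by
  have hgC : Continuous g := hg.continuous
  have hwC : Continuous w := hw.continuous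
  have hcg : ∀ x ∈ Set.Icc (0:ℝ) R, ContinuousAt (fun t => 1 / g t) x :=
    fun x hx => continuousAt_const.div hgC.continuousAt (hgpos x hx).ne'
  have hInt1g : ∀ a b : ℝ, 0 ≤ a → a ≤ b → b ≤ R →
      IntervalIntegrable (fun t => 1 / g t) volume a b := by
    intro a b ha hab hbR
    apply ContinuousOn.intervalIntegrable
    intro x hx
    rw [Set.uIcc_of_le hab] at hx
    exact (hcg x ⟨le_trans ha hx.1, le_trans hx.2 hbR⟩).continuousWithinAt
  have hs_sub : ∀ a b : ℝ, 0 ≤ a → a ≤ b → b ≤ R →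
      s b - s a = ∫ t in a..b, 1 / g t := by
    intro a b ha hab hbR
    rw [hs a, hs b,
      ← intervalIntegral.integral_add_adjacent_intervals
        (hInt1g 0 a le_rfl ha (le_trans hab hbR)) (hInt1g a b ha hab hbR)]
    ring
  have hsmono : ∀ a b : ℝ, 0 ≤ a → a < b → b ≤ R → s a < s b := by
    intro a b ha hab hbR
    have h2 := hs_sub a b ha hab.le hbR
    have hpos : 0 < ∫ t in a..b, 1 / g t := by
      apply intervalIntegral.intervalIntegral_pos_of_pos_on (hInt1g a b ha hab.le hbR) _ hab
      intro x hx
      exact div_pos one_pos (hgpos x ⟨le_trans ha hx.1.le, le_trans hx.2.le hbR⟩)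
    linarith
  have hs0 : s 0 = 0 := by rw [hs 0]; exact intervalIntegral.integral_same
  have hSpos : 0 < s R := by have := hsmono 0 R le_rfl hR le_rfl; rwa [hs0] at this
  have hsmem : ∀ r ∈ Set.Ioo (0:ℝ) R, s r ∈ Set.Ioo (0:ℝ) (s R) := by
    intro r hr
    constructor
    · have := hsmono 0 r le_rfl hr.1 hr.2.le; rwa [hs0] at this
    · exact hsmono r R hr.1.le hr.2 le_rfl
  have hsmemIoc : ∀ r ∈ Set.Ioc (0:ℝ) R, s r ∈ Set.Ioc (0:ℝ) (s R) := by
    intro r hr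
    refine ⟨by have := hsmono 0 r le_rfl hr.1 hr.2; rwa [hs0] at this, ?_⟩
    rcases eq_or_lt_of_le hr.2 with h' | h'
    · rw [h']
    · exact (hsmono r R hr.1.le h' le_rfl).le
  have hsd : ∀ r ∈ Set.Ioo (0:ℝ) R, HasDerivAt s (1 / g r) r := by
    intro r hr
    have hU : IsOpen {x : ℝ | g x ≠ 0} := isOpen_ne_fun hgC continuous_const
    have hrU : r ∈ {x : ℝ | g x ≠ 0} := (hgpos r ⟨hr.1.le, hr.2.le⟩).ne'
    have hcont : ContinuousOn (fun t => 1 / g t) {x : ℝ | g x ≠ 0} :=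
      fun x hx => (continuousAt_const.div hgC.continuousAt hx).continuousWithinAt
    have hd := intervalIntegral.integral_hasDerivAt_right
      (hInt1g 0 r le_rfl hr.1.le hr.2.le)
      (hcont.stronglyMeasurableAtFilter hU r hrU) (hcg r ⟨hr.1.le, hr.2.le⟩)
    have hsfun : s = fun u => ∫ t in (0:ℝ)..u, 1 / g t := funext hs
    rw [hsfun]; exact hd
  -- W basics
  have hm1 : ((m:ℝ) - 1) ≠ 0 := by
    have : (2:ℝ) ≤ (m:ℝ) := by exact_mod_cast hm
    linarith
  have hcast : ((m - 1 : ℕ) : ℝ) = (m:ℝ) - 1 := by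
    rw [Nat.cast_sub (by omega)]; simp
  have hρmem : ∀ σ ∈ Set.Ioc (0:ℝ) (s R), ρ σ ∈ Set.Ioc (0:ℝ) R := by
    intro σ hσ
    obtain ⟨h1, h2⟩ := hsρ σ ⟨hσ.1.le, hσ.2⟩
    refine ⟨?_, h2.2⟩
    rcases eq_or_lt_of_le h2.1 with h' | h'
    · exfalso; rw [← h', hs0] at h1; exact hσ.1.ne' h1.symm
    · exact h'
  have hPs : ∀ x ∈ Set.Ioc (0:ℝ) R, W (s x) ^ (m - 1) = Λ x := by
    intro x hx
    rw [hWdef (s x) (hsmemIoc x hx), hρs x ⟨hx.1.le, hx.2⟩,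
      ← Real.rpow_natCast (Λ x ^ (((m:ℝ) - 1)⁻¹)) (m - 1),
      ← Real.rpow_mul (hΛpos x hx).le, hcast, inv_mul_cancel₀ hm1, Real.rpow_one]
  have hWpos : ∀ σ ∈ Set.Ioc (0:ℝ) (s R), 0 < W σ := by
    intro σ hσ
    rw [hWdef σ hσ]
    exact Real.rpow_pos_of_pos (hΛpos _ (hρmem σ hσ)) _
  have hPpos : ∀ σ ∈ Set.Ioc (0:ℝ) (s R), 0 < W σ ^ (m - 1) :=
    fun σ hσ => pow_pos (hWpos σ hσ) _
  have hWcont : ContinuousOn W (Set.Icc (0:ℝ) (s R)) := hWsmooth.continuousOn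
  have hIccmem : ∀ σ ∈ Set.Ioo (0:ℝ) (s R), Set.Icc (0:ℝ) (s R) ∈ 𝓝 σ :=
    fun σ hσ => Filter.mem_of_superset (Ioo_mem_nhds hσ.1 hσ.2) Set.Ioo_subset_Icc_self
  have hWdiffAt : ∀ σ ∈ Set.Ioo (0:ℝ) (s R), DifferentiableAt ℝ W σ :=
    fun σ hσ => (hWsmooth.contDiffAt (hIccmem σ hσ)).differentiableAt (by simp)
  -- Lipschitz-type upper bound for W
  have hUD : UniqueDiffOn ℝ (Set.Icc (0:ℝ) (s R)) := uniqueDiffOn_Icc hSpos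
  have hW'cont : ContinuousOn (derivWithin W (Set.Icc (0:ℝ) (s R))) (Set.Icc (0:ℝ) (s R)) :=
    hWsmooth.continuousOn_derivWithin hUD (by simp)
  obtain ⟨L, hL⟩ := (isCompact_Icc (a := (0:ℝ)) (b := s R)).exists_bound_of_continuousOn hW'cont
  have hL0 : 0 ≤ L := le_trans (norm_nonneg _) (hL 0 ⟨le_rfl, hSpos.le⟩)
  have hWle : ∀ t ∈ Set.Icc (0:ℝ) (s R), |W t| ≤ L * t := by
    intro t ht
    have hmvt := Convex.norm_image_sub_le_of_norm_hasDerivWithin_le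
      (f := W) (f' := derivWithin W (Set.Icc (0:ℝ) (s R)))
      (fun x hx => ((hWsmooth.differentiableOn (by simp)) x hx).hasDerivWithinAt) hL
      (convex_Icc _ _) (Set.left_mem_Icc.2 hSpos.le) ht
    rw [hW0, sub_zero, sub_zero, Real.norm_eq_abs, Real.norm_eq_abs,
      abs_of_nonneg ht.1] at hmvt
    exact hmvt
  -- lower bound for W near 0
  have hWlow : ∃ δ > 0, δ ≤ s R ∧ ∀ t : ℝ, 0 < t → t < δ → t / 2 ≤ W t := by
    have hd : HasDerivWithinAt W 1 (Set.Icc (0:ℝ) (s R)) 0 := by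
      have := ((hWsmooth.differentiableOn (by simp)) 0
        (Set.left_mem_Icc.2 hSpos.le)).hasDerivWithinAt
      rwa [hW'0] at this
    rw [hasDerivWithinAt_iff_tendsto_slope] at hd
    have hev : ∀ᶠ t in 𝓝[Set.Icc (0:ℝ) (s R) \ {0}] 0, 1/2 < slope W 0 t :=
      hd.eventually (eventually_gt_nhds (by norm_num))
    rw [eventually_nhdsWithin_iff, Metric.eventually_nhds_iff] at hev
    obtain ⟨ε, hε, hball⟩ := hev
    refine ⟨min ε (s R), lt_min hε hSpos, min_le_right _ _, ?_⟩
    intro t ht htδ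
    have h1 : dist t 0 < ε := by
      rw [Real.dist_eq, sub_zero, abs_of_pos ht]
      exact lt_of_lt_of_le htδ (min_le_left _ _)
    have h2 : t ∈ Set.Icc (0:ℝ) (s R) \ {0} :=
      ⟨⟨ht.le, le_trans htδ.le (min_le_right _ _)⟩, fun hmem => ht.ne' hmem⟩
    have h3 := hball h1 h2
    rw [slope_def_field, hW0, sub_zero, sub_zero] at h3
    rw [div_lt_div_iff₀ (by norm_num) ht] at h3
    linarith
  have hPb : ∀ t ∈ Set.Icc (0:ℝ) (s R), |W t ^ (m - 1)| ≤ (L * s R) ^ (m - 1) := by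
    intro t ht
    rw [abs_pow]
    apply pow_le_pow_left₀ (abs_nonneg _)
    exact le_trans (hWle t ht) (mul_le_mul_of_nonneg_left ht.2 hL0)
  have claimB : ∀ j : ℕ, ContinuousOn (uW j) (Set.Ioc (0:ℝ) (s R)) →
      ∀ C : ℝ, 0 ≤ C → (∀ σ ∈ Set.Ioc (0:ℝ) (s R), |uW j σ| ≤ C) →
      (∀ a b : ℝ, 0 ≤ a → a ≤ b → b ≤ s R →
        IntervalIntegrable (fun τ => W τ ^ (m - 1) * uW j τ) volume a b) ∧
      ContinuousOn (fun t => ∫ τ in (0:ℝ)..t, W τ ^ (m - 1) * uW j τ) (Set.Icc (0:ℝ) (s R)) ∧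
      ContinuousOn (fun t => (∫ τ in (0:ℝ)..t, W τ ^ (m - 1) * uW j τ) / W t ^ (m - 1))
        (Set.Ioc (0:ℝ) (s R)) ∧
      (∃ K : ℝ, 0 ≤ K ∧ ∀ t ∈ Set.Ioc (0:ℝ) (s R),
        |(∫ τ in (0:ℝ)..t, W τ ^ (m - 1) * uW j τ) / W t ^ (m - 1)| ≤ K) ∧
      (∀ σ ∈ Set.Ioo (0:ℝ) (s R),
        HasDerivAt (fun t => ∫ τ in (0:ℝ)..t, W τ ^ (m - 1) * uW j τ)
          (W σ ^ (m - 1) * uW j σ) σ) := by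
    intro j hcont C hC0 hbd
    have hPUcont : ContinuousOn (fun τ => W τ ^ (m - 1) * uW j τ) (Set.Ioc (0:ℝ) (s R)) :=
      ((hWcont.mono Set.Ioc_subset_Icc_self).pow _).mul hcont
    have hIntOn : IntegrableOn (fun τ => W τ ^ (m - 1) * uW j τ) (Set.Ioc (0:ℝ) (s R)) := by
      refine ⟨hPUcont.aestronglyMeasurable measurableSet_Ioc, ?_⟩
      apply MeasureTheory.HasFiniteIntegral.restrict_of_bounded
        (C := (L * s R) ^ (m - 1) * C) measure_Ioc_lt_top
      filter_upwards [MeasureTheory.ae_restrict_mem measurableSet_Ioc] with τ hτ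
      rw [Real.norm_eq_abs, abs_mul]
      exact mul_le_mul (hPb τ (Set.Ioc_subset_Icc_self hτ)) (hbd τ hτ) (abs_nonneg _)
        (by positivity)
    have hII : ∀ a b : ℝ, 0 ≤ a → a ≤ b → b ≤ s R →
        IntervalIntegrable (fun τ => W τ ^ (m - 1) * uW j τ) volume a b := by
      intro a b ha hab hbS
      rw [intervalIntegrable_iff_integrableOn_Ioc_of_le hab]
      exact hIntOn.mono_set (Set.Ioc_subset_Ioc ha hbS)
    have hFcont : ContinuousOn (fun t => ∫ τ in (0:ℝ)..t, W τ ^ (m - 1) * uW j τ)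
        (Set.Icc (0:ℝ) (s R)) := by
      have h1 : IntegrableOn (fun τ => W τ ^ (m - 1) * uW j τ) (Set.uIcc (0:ℝ) (s R)) := by
        rw [Set.uIcc_of_le hSpos.le, integrableOn_Icc_iff_integrableOn_Ioc]
        exact hIntOn
      have := intervalIntegral.continuousOn_primitive_interval h1
      rwa [Set.uIcc_of_le hSpos.le] at this
    have hGcont : ContinuousOn
        (fun t => (∫ τ in (0:ℝ)..t, W τ ^ (m - 1) * uW j τ) / W t ^ (m - 1))
        (Set.Ioc (0:ℝ) (s R)) :=
      (hFcont.mono Set.Ioc_subset_Icc_self).div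
        ((hWcont.mono Set.Ioc_subset_Icc_self).pow _) (fun t ht => (hPpos t ht).ne')
    refine ⟨hII, hFcont, hGcont, ?_, ?_⟩
    · -- bound on G
      obtain ⟨δ, hδ0, hδS, hlow⟩ := hWlow
      obtain ⟨K₂, hK₂⟩ := (isCompact_Icc (a := δ) (b := s R)).exists_bound_of_continuousOn
        (hGcont.mono (fun x hx => ⟨lt_of_lt_of_le hδ0 hx.1, hx.2⟩))
      refine ⟨max ((2*L) ^ (m - 1) * C * s R) K₂, le_trans (by positivity) (le_max_left _ _), ?_⟩
      intro t ht
      rcases lt_or_ge t δ with htδ | htδ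
      · -- small t regime
        have hFb : |∫ τ in (0:ℝ)..t, W τ ^ (m - 1) * uW j τ| ≤ (L * t) ^ (m - 1) * C * t := by
          have hb := intervalIntegral.norm_integral_le_of_norm_le_const
            (C := (L * t) ^ (m - 1) * C) (f := fun τ => W τ ^ (m - 1) * uW j τ)
            (a := (0:ℝ)) (b := t) ?_
          · rw [Real.norm_eq_abs] at hb
            calc |∫ τ in (0:ℝ)..t, W τ ^ (m - 1) * uW j τ|
                ≤ (L * t) ^ (m - 1) * C * |t - 0| := hb
              _ = (L * t) ^ (m - 1) * C * t := by rw [sub_zero, abs_of_pos ht.1]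
          · intro x hx
            rw [Set.uIoc_of_le ht.1.le] at hx
            have hxS : x ∈ Set.Ioc (0:ℝ) (s R) := ⟨hx.1, le_trans hx.2 ht.2⟩
            rw [Real.norm_eq_abs, abs_mul]
            apply mul_le_mul _ (hbd x hxS) (abs_nonneg _) (pow_nonneg (mul_nonneg hL0 ht.1.le) _)
            rw [abs_pow]
            apply pow_le_pow_left₀ (abs_nonneg _)
            exact le_trans (hWle x (Set.Ioc_subset_Icc_self hxS))
              (mul_le_mul_of_nonneg_left hx.2 hL0)
        have hPlow : ((t/2) : ℝ) ^ (m - 1) ≤ W t ^ (m - 1) :=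
          pow_le_pow_left₀ (by linarith [ht.1]) (hlow t ht.1 htδ) _
        have hPlow0 : (0:ℝ) < (t/2) ^ (m - 1) := pow_pos (by linarith [ht.1]) _
        have := abs_div (∫ τ in (0:ℝ)..t, W τ ^ (m - 1) * uW j τ) (W t ^ (m - 1))
        rw [this, abs_of_pos (hPpos t ht)]
        refine le_trans (div_le_div₀ (mul_nonneg (mul_nonneg (pow_nonneg (mul_nonneg hL0 ht.1.le) _) hC0) ht.1.le) hFb hPlow0 hPlow) ?_
        have hEq : (L * t) ^ (m - 1) * C * t / (t / 2) ^ (m - 1)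
            = (2 * L) ^ (m - 1) * C * t := by
          rw [div_eq_iff hPlow0.ne', show L * t = (2 * L) * (t / 2) by ring, mul_pow]
          ring
        rw [hEq]
        refine le_trans ?_ (le_max_left _ _)
        exact mul_le_mul_of_nonneg_left ht.2
          (mul_nonneg (pow_nonneg (by linarith) _) hC0)
      · -- compact regime
        refine le_trans (le_of_eq (Real.norm_eq_abs _).symm) ?_
        exact le_trans (hK₂ t ⟨htδ, ht.2⟩) (le_max_right _ _)
    · -- derivative of primitive
      intro σ hσ
      have hPUopen : ContinuousOn (fun τ => W τ ^ (m - 1) * uW j τ) (Set.Ioo (0:ℝ) (s R)) :=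
        hPUcont.mono Set.Ioo_subset_Ioc_self
      exact intervalIntegral.integral_hasDerivAt_right
        (hII 0 σ le_rfl hσ.1.le hσ.2.le)
        (hPUopen.stronglyMeasurableAtFilter isOpen_Ioo σ hσ)
        (hPUcont.continuousAt (Filter.mem_of_superset (Ioo_mem_nhds hσ.1 hσ.2)
          Set.Ioo_subset_Ioc_self))
  have claimA : ∀ j : ℕ, ∃ C : ℝ, 0 ≤ C ∧ ContinuousOn (uW j) (Set.Ioc (0:ℝ) (s R)) ∧
      ∀ σ ∈ Set.Ioc (0:ℝ) (s R), |uW j σ| ≤ C := by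
    intro j
    induction j with
    | zero =>
      refine ⟨1, zero_le_one, ?_, fun σ _ => by rw [huW0]; norm_num⟩
      have h0 : uW 0 = fun _ => (1:ℝ) := funext huW0
      rw [h0]; exact continuousOn_const
    | succ j ih =>
      obtain ⟨C, hC0, hcont, hbd⟩ := ih
      obtain ⟨hII, hFcont, hGcont, ⟨K, hK0, hK⟩, hFd⟩ := claimB j hcont C hC0 hbd
      have huWeq : uW (j+1) = fun σ => ((j:ℝ)+1) *
          ∫ t in σ..(s R), (∫ τ in (0:ℝ)..t, W τ ^ (m - 1) * uW j τ) / W t ^ (m - 1) :=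
        funext (huWrec j)
      refine ⟨((j:ℝ)+1) * (K * s R), by positivity, ?_, ?_⟩
      · intro σ₀ hσ₀
        have ha0 : 0 < σ₀/2 := by linarith [hσ₀.1]
        have haσ : σ₀/2 < σ₀ := by linarith [hσ₀.1]
        have haS : σ₀/2 ≤ s R := le_trans haσ.le hσ₀.2
        have hsub : Set.Icc (σ₀/2) (s R) ⊆ Set.Ioc (0:ℝ) (s R) :=
          fun x hx => ⟨lt_of_lt_of_le ha0 hx.1, hx.2⟩
        have hGint : IntegrableOn
            (fun t => (∫ τ in (0:ℝ)..t, W τ ^ (m - 1) * uW j τ) / W t ^ (m - 1))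
            (Set.uIcc (σ₀/2) (s R)) := by
          rw [Set.uIcc_of_le haS]
          exact (hGcont.mono hsub).integrableOn_Icc
        have hprim := intervalIntegral.continuousOn_primitive_interval_left hGint
        rw [Set.uIcc_of_le haS] at hprim
        rw [huWeq]
        have h1 : ContinuousWithinAt (fun σ => ((j:ℝ)+1) *
            ∫ t in σ..(s R), (∫ τ in (0:ℝ)..t, W τ ^ (m - 1) * uW j τ) / W t ^ (m - 1))
            (Set.Icc (σ₀/2) (s R)) σ₀ :=
          continuousWithinAt_const.mul (hprim σ₀ ⟨haσ.le, hσ₀.2⟩)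
        apply ContinuousWithinAt.mono_of_mem_nhdsWithin h1
        rw [mem_nhdsWithin]
        exact ⟨Set.Ioi (σ₀/2), isOpen_Ioi, haσ, fun x hx => ⟨le_of_lt hx.1, hx.2.2⟩⟩
      · intro σ hσ
        rw [huWrec j σ, abs_mul, abs_of_nonneg (by positivity : (0:ℝ) ≤ (j:ℝ)+1)]
        apply mul_le_mul_of_nonneg_left _ (by positivity)
        have hb := intervalIntegral.norm_integral_le_of_norm_le_const (C := K)
          (f := fun t => (∫ τ in (0:ℝ)..t, W τ ^ (m - 1) * uW j τ) / W t ^ (m - 1))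
          (a := σ) (b := s R) ?_
        · rw [Real.norm_eq_abs] at hb
          refine le_trans hb ?_
          have habs : |s R - σ| ≤ s R := by
            rw [abs_of_nonneg (by linarith [hσ.2] : (0:ℝ) ≤ s R - σ)]
            linarith [hσ.1]
          exact mul_le_mul_of_nonneg_left habs hK0
        · intro x hx
          rw [Set.uIoc_of_le hσ.2] at hx
          rw [Real.norm_eq_abs]
          exact hK x ⟨lt_trans hσ.1 hx.1, hx.2⟩
  have claimC : ∀ j : ℕ, ContinuousOn (uW j) (Set.Ioc (0:ℝ) (s R)) →
      ∀ C : ℝ, 0 ≤ C → (∀ σ ∈ Set.Ioc (0:ℝ) (s R), |uW j σ| ≤ C) →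
      ∀ σ ∈ Set.Ioo (0:ℝ) (s R),
      HasDerivAt (uW (j+1))
        (((j:ℝ)+1) * -((∫ τ in (0:ℝ)..σ, W τ ^ (m - 1) * uW j τ) / W σ ^ (m - 1))) σ := by
    intro j hcont C hC0 hbd σ hσ
    obtain ⟨hII, hFcont, hGcont, _, hFd⟩ := claimB j hcont C hC0 hbd
    have hGIσ : IntervalIntegrable
        (fun t => (∫ τ in (0:ℝ)..t, W τ ^ (m - 1) * uW j τ) / W t ^ (m - 1))
        volume σ (s R) := by
      apply ContinuousOn.intervalIntegrable
      rw [Set.uIcc_of_le hσ.2.le]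
      exact hGcont.mono (fun x hx => ⟨lt_of_lt_of_le hσ.1 hx.1, hx.2⟩)
    have hGoo : ContinuousOn
        (fun t => (∫ τ in (0:ℝ)..t, W τ ^ (m - 1) * uW j τ) / W t ^ (m - 1))
        (Set.Ioo (0:ℝ) (s R)) := hGcont.mono Set.Ioo_subset_Ioc_self
    have hd := intervalIntegral.integral_hasDerivAt_left hGIσ
      (hGoo.stronglyMeasurableAtFilter isOpen_Ioo σ hσ)
      (hGcont.continuousAt (Filter.mem_of_superset (Ioo_mem_nhds hσ.1 hσ.2)
        Set.Ioo_subset_Ioc_self))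
    have huWeq : uW (j+1) = fun σ => ((j:ℝ)+1) *
        ∫ t in σ..(s R), (∫ τ in (0:ℝ)..t, W τ ^ (m - 1) * uW j τ) / W t ^ (m - 1) :=
      funext (huWrec j)
    rw [huWeq]
    exact HasDerivAt.const_mul _ hd

  intro k hk r hr
  obtain ⟨j, rfl⟩ : ∃ j, k = j + 1 := ⟨k - 1, (Nat.succ_pred_eq_of_pos hk).symm⟩
  obtain ⟨C, hC0, hcont, hbd⟩ := claimA j
  obtain ⟨hII, hFcont, hGcont, -, hFd⟩ := claimB j hcont C hC0 hbd
  have hσ : s r ∈ Set.Ioo (0:ℝ) (s R) := hsmem r hr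
  have hrIoc : r ∈ Set.Ioc (0:ℝ) R := ⟨hr.1, hr.2.le⟩
  have hgr : 0 < g r := hgpos r ⟨hr.1.le, hr.2.le⟩
  have hwr : 0 < w r := hwpos r hrIoc
  have hΛr : 0 < Λ r := hΛpos r hrIoc
  have hPσ : 0 < W (s r) ^ (m - 1) := hPpos (s r) (Set.Ioo_subset_Ioc_self hσ)
  have hsd' : ∀ x ∈ Set.Ioo (0:ℝ) R, HasDerivAt s (g x)⁻¹ x := by
    intro x hx; have := hsd x hx; rwa [one_div] at this
  have hfder : ∀ x ∈ Set.Ioo (0:ℝ) R, HasDerivAt (f (j+1))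
      ((((j:ℝ)+1) * -((∫ τ in (0:ℝ)..(s x), W τ ^ (m - 1) * uW j τ)
        / W (s x) ^ (m - 1))) * (g x)⁻¹) x := by
    intro x hx
    have hcomp := (claimC j hcont C hC0 hbd (s x) (hsmem x hx)).comp x (hsd' x hx)
    have hfx : f (j+1) = (uW (j+1)) ∘ s := funext (hf (j+1))
    rw [hfx]; exact hcomp
  have hderiv1 : ∀ x ∈ Set.Ioo (0:ℝ) R, deriv (f (j+1)) x
      = (((j:ℝ)+1) * -((∫ τ in (0:ℝ)..(s x), W τ ^ (m - 1) * uW j τ)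
        / W (s x) ^ (m - 1))) * (g x)⁻¹ :=
    fun x hx => (hfder x hx).deriv
  obtain ⟨p', hPd⟩ : ∃ p', HasDerivAt (fun t => W t ^ (m - 1)) p' (s r) :=
    ⟨_, ((hWdiffAt (s r) hσ).hasDerivAt).pow _⟩
  have hΛdiff : DifferentiableAt ℝ Λ r :=
    ((hΛC1.differentiableOn one_ne_zero) r hrIoc).differentiableAt (Ioc_mem_nhds hr.1 hr.2)
  have hΛd : HasDerivAt Λ (deriv Λ r) r := hΛdiff.hasDerivAt
  have hcompPs : HasDerivAt (fun x => W (s x) ^ (m - 1)) (p' * (g r)⁻¹) r :=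
    hPd.comp r (hsd' r hr)
  have hEqF : (fun x => W (s x) ^ (m - 1)) =ᶠ[𝓝 r] Λ := by
    filter_upwards [Ioc_mem_nhds hr.1 hr.2] with x hx using hPs x hx
  have hΛd2 : HasDerivAt Λ (p' * (g r)⁻¹) r := hcompPs.congr_of_eventuallyEq hEqF.symm
  have hp' : p' = deriv Λ r * g r := by
    have huniq := hΛd2.unique hΛd
    rw [← huniq]; field_simp
  have hwd : HasDerivAt w (deriv w r) r := (hw.differentiable (by simp) r).hasDerivAt
  have hgd : HasDerivAt g (deriv g r) r := (hg.differentiable (by simp) r).hasDerivAt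
  have hODE : HasDerivAt (fun t => Λ t * w t * g t)
      ((m:ℝ) * (Λ r / g r) * (deriv w r - h r * w r)) r :=
    (hΛode r hrIoc).hasDerivAt (Ioc_mem_nhds hr.1 hr.2)
  have hprod : HasDerivAt (fun t => Λ t * w t * g t)
      ((deriv Λ r * w r + Λ r * deriv w r) * g r + Λ r * w r * deriv g r) r :=
    (hΛd.mul hwd).mul hgd
  have hodeq : (deriv Λ r * w r + Λ r * deriv w r) * g r + Λ r * w r * deriv g r
      = (m:ℝ) * (Λ r / g r) * (deriv w r - h r * w r) := hprod.unique hODE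
  have hFd' := hFd (s r) hσ
  have hDd : HasDerivAt
      (fun t => (∫ τ in (0:ℝ)..t, W τ ^ (m - 1) * uW j τ) / W t ^ (m - 1))
      ((W (s r) ^ (m - 1) * uW j (s r) * W (s r) ^ (m - 1)
        - (∫ τ in (0:ℝ)..(s r), W τ ^ (m - 1) * uW j τ) * p')
        / (W (s r) ^ (m - 1)) ^ 2) (s r) :=
    hFd'.div hPd hPσ.ne'
  have hDk : HasDerivAt
      (fun t => ((j:ℝ)+1) * -((∫ τ in (0:ℝ)..t, W τ ^ (m - 1) * uW j τ) / W t ^ (m - 1)))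
      (((j:ℝ)+1) * -((W (s r) ^ (m - 1) * uW j (s r) * W (s r) ^ (m - 1)
        - (∫ τ in (0:ℝ)..(s r), W τ ^ (m - 1) * uW j τ) * p')
        / (W (s r) ^ (m - 1)) ^ 2)) (s r) :=
    HasDerivAt.const_mul _ hDd.neg
  have hcomp2 : HasDerivAt
      (fun x => ((j:ℝ)+1) * -((∫ τ in (0:ℝ)..(s x), W τ ^ (m - 1) * uW j τ)
        / W (s x) ^ (m - 1)))
      ((((j:ℝ)+1) * -((W (s r) ^ (m - 1) * uW j (s r) * W (s r) ^ (m - 1)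
        - (∫ τ in (0:ℝ)..(s r), W τ ^ (m - 1) * uW j τ) * p')
        / (W (s r) ^ (m - 1)) ^ 2)) * (g r)⁻¹) r :=
    hDk.comp r (hsd' r hr)
  have hinv : HasDerivAt (fun x => (g x)⁻¹) (-(deriv g r) / g r ^ 2) r := hgd.inv hgr.ne'
  have hmul := hcomp2.mul hinv
  have hev : deriv (f (j+1)) =ᶠ[𝓝 r]
      (fun x => (((j:ℝ)+1) * -((∫ τ in (0:ℝ)..(s x), W τ ^ (m - 1) * uW j τ)
        / W (s x) ^ (m - 1))) * (g x)⁻¹) := by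
    filter_upwards [Ioo_mem_nhds hr.1 hr.2] with x hx using hderiv1 x hx
  have h2eq : deriv (deriv (f (j+1))) r
      = (((j:ℝ)+1) * -((W (s r) ^ (m - 1) * uW j (s r) * W (s r) ^ (m - 1)
        - (∫ τ in (0:ℝ)..(s r), W τ ^ (m - 1) * uW j τ) * p')
        / (W (s r) ^ (m - 1)) ^ 2)) * (g r)⁻¹ * (g r)⁻¹
        + (((j:ℝ)+1) * -((∫ τ in (0:ℝ)..(s r), W τ ^ (m - 1) * uW j τ)
        / W (s r) ^ (m - 1))) * (-(deriv g r) / g r ^ 2) := by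
    rw [hev.deriv_eq]; exact hmul.deriv
  have hjj : j + 1 - 1 = j := by omega
  rw [h2eq, hderiv1 r hr, hjj, hf j r, hPs r hrIoc, hp']
  have hgr' : g r ≠ 0 := hgr.ne'
  have hwr' : w r ≠ 0 := hwr.ne'
  have hΛr' : Λ r ≠ 0 := hΛr.ne'
  have hodeq2 : ((deriv Λ r * w r + Λ r * deriv w r) * g r + Λ r * w r * deriv g r) * g r
      = (m:ℝ) * Λ r * (deriv w r - h r * w r) := by
    rw [hodeq]; field_simp
  have hΛ' : deriv Λ r = ((m:ℝ) * Λ r * (deriv w r - h r * w r)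
      - Λ r * deriv w r * g r ^ 2 - Λ r * w r * deriv g r * g r) / (w r * g r ^ 2) := by
    rw [eq_div_iff (mul_ne_zero hwr' (pow_ne_zero _ hgr'))]
    linear_combination hodeq2
  rw [hΛ']
  push_cast
  field_simp
  ring
end

section
/- For every integer k ≥ 1 and every r ∈ (0, R]: f_k'(r) = −k (∫_0^r (Λ(t)/g(t)) f_{k−1}(t) dt) / (Λ(r) g(r)), and consequently f_k'(r) ≤ −k f_{k−1}(r) q_W(s(r)) / g(r); moreover equality holds for k = 1 (since f_0 ≡ 1), and the inequality is strict for every k ≥ 2 and r ∈ (0, R]. -/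
open Set MeasureTheory intervalIntegral Filter


set_option maxHeartbeats 1600000 in
/-- For every `k ≥ 1` and `r ∈ (0,R]`, the derivative of
`f_k = ũ^W_k ∘ s` satisfies
`f_k'(r) = -k (∫_0^r (Λ/g) f_{k-1})/(Λ(r) g(r))`, hence
`f_k'(r) ≤ -k f_{k-1}(r) q_W(s(r))/g(r)`, with equality when `k = 1`
(since `f_0 ≡ 1`) and with strict inequality for every `k ≥ 2`. -/
theorem comparison_space_derivative_estimate
    (m : ℕ) (hm : 2 ≤ m) (R : ℝ) (hR : 0 < R)
    (w : ℝ → ℝ) (hw : ContDiff ℝ (⊤ : ℕ∞) w) (hw0 : w 0 = 0)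
    (hw'0 : deriv w 0 = 1) (hwpos : ∀ r ∈ Set.Ioc (0 : ℝ) R, 0 < w r)
    (g : ℝ → ℝ) (hg : ContDiff ℝ (⊤ : ℕ∞) g) (hg0 : g 0 = 1)
    (hgpos : ∀ r ∈ Set.Icc (0 : ℝ) R, 0 < g r)
    (hgle : ∀ r ∈ Set.Icc (0 : ℝ) R, g r ≤ 1)
    (h : ℝ → ℝ) (hh : ContDiff ℝ (⊤ : ℕ∞) h)
    (s : ℝ → ℝ) (hs : ∀ r : ℝ, s r = ∫ t in (0 : ℝ)..r, 1 / g t)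
    (ρ : ℝ → ℝ) (hρs : ∀ r ∈ Set.Icc (0 : ℝ) R, ρ (s r) = r)
    (hsρ : ∀ σ ∈ Set.Icc (0 : ℝ) (s R), s (ρ σ) = σ ∧ ρ σ ∈ Set.Icc (0 : ℝ) R)
    (Λ : ℝ → ℝ) (hΛpos : ∀ r ∈ Set.Ioc (0 : ℝ) R, 0 < Λ r)
    (hΛC1 : ContDiffOn ℝ 1 Λ (Set.Ioc (0 : ℝ) R))
    (hΛode : ∀ r ∈ Set.Ioc (0 : ℝ) R,
      HasDerivWithinAt (fun t => Λ t * w t * g t)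
        ((m : ℝ) * (Λ r / g r) * (deriv w r - h r * w r)) (Set.Ioc (0 : ℝ) R) r)
    (hΛnorm : Filter.Tendsto (fun r => Λ r / r ^ (m - 1))
      (nhdsWithin (0 : ℝ) (Set.Ioi 0)) (nhds 1))
    (W : ℝ → ℝ) (hW0 : W 0 = 0)
    (hWdef : ∀ σ ∈ Set.Ioc (0 : ℝ) (s R), W σ = Λ (ρ σ) ^ (((m : ℝ) - 1)⁻¹))
(hWsmooth : ContDiffOn ℝ (⊤ : ℕ∞) W (Set.Icc (0 : ℝ) (s R)))
    (hW'0 : derivWithin W (Set.Icc (0 : ℝ) (s R)) 0 = 1)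
(uW : ℕ → ℝ → ℝ) (huW0 : ∀ σ : ℝ, uW 0 σ = 1)
    (huWrec : ∀ (k : ℕ) (σ : ℝ), uW (k + 1) σ =
      ((k : ℝ) + 1) *
        ∫ t in σ..(s R), (∫ τ in (0 : ℝ)..t, W τ ^ (m - 1) * uW k τ) / W t ^ (m - 1))
    (f : ℕ → ℝ → ℝ) (hf : ∀ (k : ℕ) (r : ℝ), f k r = uW k (s r)) :
    ∀ k : ℕ, 1 ≤ k → ∀ r ∈ Set.Ioc (0 : ℝ) R,
      derivWithin (f k) (Set.Icc (0 : ℝ) R) r =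
        -(k : ℝ) * (∫ t in (0 : ℝ)..r, (Λ t / g t) * f (k - 1) t) / (Λ r * g r) ∧
      derivWithin (f k) (Set.Icc (0 : ℝ) R) r ≤
        -(k : ℝ) * f (k - 1) r *
          ((∫ t in (0 : ℝ)..(s r), W t ^ (m - 1)) / W (s r) ^ (m - 1)) / g r ∧
      (k = 1 →
        derivWithin (f k) (Set.Icc (0 : ℝ) R) r =
          -(k : ℝ) * f (k - 1) r *
            ((∫ t in (0 : ℝ)..(s r), W t ^ (m - 1)) / W (s r) ^ (m - 1)) / g r) ∧
      (2 ≤ k →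
        derivWithin (f k) (Set.Icc (0 : ℝ) R) r <
          -(k : ℝ) * f (k - 1) r *
            ((∫ t in (0 : ℝ)..(s r), W t ^ (m - 1)) / W (s r) ^ (m - 1)) / g r) := by
  -- ====== basic facts about g and s ======
  have hgC : Continuous g := hg.continuous
  have hginv_contOn : ∀ {u v : ℝ}, Icc u v ⊆ Icc 0 R →
      ContinuousOn (fun t => 1 / g t) (Icc u v) := by
    intro u v huv
    exact ContinuousOn.div continuousOn_const (hgC.continuousOn)
      (fun x hx => (hgpos x (huv hx)).ne')
  have hs0 : s 0 = 0 := by rw [hs]; exact integral_same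
  have hs_deriv : ∀ x ∈ Icc 0 R, HasDerivAt s (1 / g x) x := by
    intro x hx
    have hII : IntervalIntegrable (fun t => 1 / g t) volume 0 x := by
      apply ContinuousOn.intervalIntegrable
      rw [uIcc_of_le hx.1]
      exact hginv_contOn (Icc_subset_Icc le_rfl hx.2)
    have hgx : g x ≠ 0 := (hgpos x hx).ne'
    have hca : ContinuousAt (fun t => 1 / g t) x :=
      ContinuousAt.div continuousAt_const hgC.continuousAt hgx
    have hmeas : StronglyMeasurableAtFilter (fun t => 1 / g t) (nhds x) volume := by
      have : Measurable fun t => 1 / g t := by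
        exact measurable_const.div hgC.measurable
      exact this.stronglyMeasurable.stronglyMeasurableAtFilter
    have := integral_hasDerivAt_right hII hmeas hca
    have hfun : s = fun u => ∫ t in (0:ℝ)..u, 1 / g t := funext hs
    rw [hfun]
    exact this
  have hs_mono : ∀ x ∈ Icc (0:ℝ) R, ∀ y ∈ Icc (0:ℝ) R, x < y → s x < s y := by
    intro x hx y hy hxy
    have h1 : IntervalIntegrable (fun t => 1 / g t) volume 0 x := by
      apply ContinuousOn.intervalIntegrable
      rw [uIcc_of_le hx.1]; exact hginv_contOn (Icc_subset_Icc le_rfl hx.2)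
    have h2 : IntervalIntegrable (fun t => 1 / g t) volume x y := by
      apply ContinuousOn.intervalIntegrable
      rw [uIcc_of_le hxy.le]; exact hginv_contOn (Icc_subset_Icc hx.1 hy.2)
    have hadd : (∫ t in (0:ℝ)..x, 1 / g t) + ∫ t in x..y, 1 / g t
        = ∫ t in (0:ℝ)..y, 1 / g t := integral_add_adjacent_intervals h1 h2
    have hpos : 0 < ∫ t in x..y, 1 / g t := by
      apply intervalIntegral_pos_of_pos_on h2 _ hxy
      intro t ht
      have htR : t ∈ Icc (0:ℝ) R := ⟨hx.1.trans ht.1.le, ht.2.le.trans hy.2⟩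
      exact one_div_pos.mpr (hgpos t htR)
    rw [hs x, hs y]
    linarith
  -- ====== the right endpoint b = s R ======
  have hs_mono_le : ∀ x ∈ Icc (0:ℝ) R, ∀ y ∈ Icc (0:ℝ) R, x ≤ y → s x ≤ s y := by
    intro x hx y hy hxy
    rcases eq_or_lt_of_le hxy with rfl | hlt
    · exact le_rfl
    · exact (hs_mono x hx y hy hlt).le
  have hbpos : 0 < s R := by
    have := hs_mono 0 ⟨le_rfl, hR.le⟩ R ⟨hR.le, le_rfl⟩ hR
    rwa [hs0] at this
  have hmaps : ∀ x ∈ Icc (0:ℝ) R, s x ∈ Icc (0:ℝ) (s R) := by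
    intro x hx
    constructor
    · have := hs_mono_le 0 ⟨le_rfl, hR.le⟩ x hx hx.1
      rwa [hs0] at this
    · exact hs_mono_le x hx R ⟨hR.le, le_rfl⟩ hx.2
  have hsIoc : ∀ r ∈ Ioc (0:ℝ) R, s r ∈ Ioc (0:ℝ) (s R) := by
    intro r hr
    refine ⟨?_, (hmaps r ⟨hr.1.le, hr.2⟩).2⟩
    have := hs_mono 0 ⟨le_rfl, hR.le⟩ r ⟨hr.1.le, hr.2⟩ hr.1
    rwa [hs0] at this
  -- ====== facts about W ======
  have hWcont : ContinuousOn W (Icc 0 (s R)) := hWsmooth.continuousOn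
  have hWpos : ∀ σ ∈ Ioc (0:ℝ) (s R), 0 < W σ := by
    intro σ hσ
    obtain ⟨hsρσ, hρσ⟩ := hsρ σ (Ioc_subset_Icc_self hσ)
    have hρpos : ρ σ ∈ Ioc (0:ℝ) R := by
      refine ⟨lt_of_le_of_ne hρσ.1 ?_, hρσ.2⟩
      intro hzero
      rw [← hzero, hs0] at hsρσ
      exact hσ.1.ne' hsρσ.symm
    rw [hWdef σ hσ]
    exact Real.rpow_pos_of_pos (hΛpos _ hρpos) _
  have hWnonneg : ∀ σ ∈ Icc (0:ℝ) (s R), 0 ≤ W σ := by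
    intro σ hσ
    rcases eq_or_lt_of_le hσ.1 with rfl | hlt
    · exact le_of_eq hW0.symm
    · exact (hWpos σ ⟨hlt, hσ.2⟩).le
  have hm1 : (1:ℕ) ≤ m := le_trans one_le_two hm
  have hmcast : ((m - 1 : ℕ) : ℝ) = (m : ℝ) - 1 := by
    push_cast [Nat.cast_sub hm1]; ring
  have hmne : (m : ℝ) - 1 ≠ 0 := by
    have : (2:ℝ) ≤ (m:ℝ) := by exact_mod_cast hm
    linarith
  have hΛeq : ∀ r ∈ Ioc (0:ℝ) R, W (s r) ^ (m - 1) = Λ r := by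
    intro r hr
    have hσ : s r ∈ Ioc (0:ℝ) (s R) := hsIoc r hr
    have hρ : ρ (s r) = r := hρs r ⟨hr.1.le, hr.2⟩
    have hΛr : 0 < Λ r := hΛpos r hr
    rw [hWdef (s r) hσ, hρ, ← Real.rpow_natCast (Λ r ^ (((m:ℝ)-1)⁻¹)) (m-1),
      ← Real.rpow_mul hΛr.le, hmcast, inv_mul_cancel₀ hmne, Real.rpow_one]
  -- ====== bounds on W near 0 ======
  obtain ⟨δ, hδ0, hδb, hWbd⟩ :
      ∃ δ, 0 < δ ∧ δ ≤ s R ∧ ∀ t ∈ Icc (0:ℝ) δ, t / 2 ≤ W t ∧ W t ≤ 2 * t := by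
    have hUD : UniqueDiffOn ℝ (Icc (0:ℝ) (s R)) := uniqueDiffOn_Icc hbpos
    have hW'cont : ContinuousOn (derivWithin W (Icc (0:ℝ) (s R))) (Icc 0 (s R)) :=
      hWsmooth.continuousOn_derivWithin hUD (by simp)
    have hmemIoo : Ioo (1/2 : ℝ) 2 ∈ nhds (derivWithin W (Icc (0:ℝ) (s R)) 0) := by
      rw [hW'0]
      exact Ioo_mem_nhds (by norm_num) (by norm_num)
    have hmem : derivWithin W (Icc (0:ℝ) (s R)) ⁻¹' (Ioo (1/2 : ℝ) 2)
        ∈ nhdsWithin 0 (Icc 0 (s R)) :=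
      hW'cont 0 ⟨le_rfl, hbpos.le⟩ hmemIoo
    obtain ⟨U, hUopen, hU0, hUsub⟩ := mem_nhdsWithin.mp hmem
    obtain ⟨ε, hε, hball⟩ := Metric.isOpen_iff.mp hUopen 0 hU0
    refine ⟨min (ε/2) (s R), lt_min (by linarith) hbpos, min_le_right _ _, ?_⟩
    have hδsub : ∀ t ∈ Icc (0:ℝ) (min (ε/2) (s R)),
        t ∈ Icc (0:ℝ) (s R) ∧ derivWithin W (Icc (0:ℝ) (s R)) t ∈ Ioo (1/2:ℝ) 2 := by
      intro t ht
      have ht1 : t ∈ Icc (0:ℝ) (s R) := ⟨ht.1, ht.2.trans (min_le_right _ _)⟩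
      have htU : t ∈ U := by
        apply hball
        rw [Metric.mem_ball, Real.dist_eq, sub_zero, abs_of_nonneg ht.1]
        have := ht.2.trans (min_le_left _ _)
        linarith
      exact ⟨ht1, hUsub ⟨htU, ht1⟩⟩
    set δ := min (ε/2) (s R) with hδdef
    have hδpos : 0 < δ := lt_min (by linarith) hbpos
    have hδb : δ ≤ s R := min_le_right _ _
    have hconv : Convex ℝ (Icc (0:ℝ) δ) := convex_Icc _ _
    have hWcD : ContinuousOn W (Icc (0:ℝ) δ) := hWcont.mono (Icc_subset_Icc le_rfl hδb)
    have hDA : ∀ x ∈ interior (Icc (0:ℝ) δ), HasDerivAt W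
        (derivWithin W (Icc (0:ℝ) (s R)) x) x := by
      intro x hx
      rw [interior_Icc] at hx
      have hx' : x ∈ Icc (0:ℝ) (s R) := ⟨hx.1.le, hx.2.le.trans hδb⟩
      have hdiff : DifferentiableWithinAt ℝ W (Icc (0:ℝ) (s R)) x :=
        (hWsmooth.differentiableOn (by simp)) x hx'
      have hnb : Icc (0:ℝ) (s R) ∈ nhds x :=
        Icc_mem_nhds hx.1 (lt_of_lt_of_le hx.2 hδb)
      exact hdiff.hasDerivWithinAt.hasDerivAt hnb
    have hdiffOn : DifferentiableOn ℝ W (interior (Icc (0:ℝ) δ)) :=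
      fun x hx => ((hDA x hx).differentiableAt).differentiableWithinAt
    have hlow : ∀ x ∈ interior (Icc (0:ℝ) δ), (1/2 : ℝ) ≤ deriv W x := by
      intro x hx
      rw [(hDA x hx).deriv]
      have hx2 := hx; rw [interior_Icc] at hx2
      exact ((hδsub x ⟨hx2.1.le, hx2.2.le⟩).2).1.le
    have hup : ∀ x ∈ interior (Icc (0:ℝ) δ), deriv W x ≤ (2 : ℝ) := by
      intro x hx
      rw [(hDA x hx).deriv]
      have hx2 := hx; rw [interior_Icc] at hx2
      exact ((hδsub x ⟨hx2.1.le, hx2.2.le⟩).2).2.le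
    intro t ht
    have h0mem : (0:ℝ) ∈ Icc (0:ℝ) δ := ⟨le_rfl, hδpos.le⟩
    have hl := hconv.mul_sub_le_image_sub_of_le_deriv hWcD hdiffOn hlow 0 h0mem t ht ht.1
    have hu := hconv.image_sub_le_mul_sub_of_deriv_le hWcD hdiffOn hup 0 h0mem t ht ht.1
    rw [hW0] at hl hu
    constructor <;> linarith
  -- ====== clamping to [0, s R] ======
  set e : ℝ → ℝ := fun t => max 0 (min t (s R)) with he_def
  have he_cont : Continuous e := continuous_const.max (continuous_id.min continuous_const)
  have he_mem : ∀ t, e t ∈ Icc (0:ℝ) (s R) := fun t =>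
    ⟨le_max_left _ _, max_le hbpos.le (min_le_right _ _)⟩
  have he_id : ∀ t ∈ Icc (0:ℝ) (s R), e t = t := by
    intro t ht
    rw [he_def]
    simp only
    rw [min_eq_left ht.2, max_eq_right ht.1]
  have he_pos : ∀ t : ℝ, 0 < t → 0 < e t := by
    intro t ht
    rw [he_def]
    exact lt_max_of_lt_right (lt_min ht hbpos)
  set Vc : ℝ → ℝ := fun t => W (e t) ^ (m - 1) with hVc_def
  have hVc_cont : Continuous Vc := (hWcont.comp_continuous he_cont he_mem).pow _
  have hVc_eq : ∀ t ∈ Icc (0:ℝ) (s R), Vc t = W t ^ (m - 1) := by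
    intro t ht
    rw [hVc_def]
    simp only
    rw [he_id t ht]
  have hVc_nonneg : ∀ t, 0 ≤ Vc t := fun t => pow_nonneg (hWnonneg _ (he_mem t)) _
  have hVc_pos : ∀ t : ℝ, 0 < t → 0 < Vc t := fun t ht =>
    pow_pos (hWpos _ ⟨he_pos t ht, (he_mem t).2⟩) _
  set Φ : ℕ → ℝ → ℝ := fun k t => uW k (e t) with hΦ_def
  set Ψ : ℕ → ℝ → ℝ := fun k t => (∫ τ in (0:ℝ)..t, Vc τ * Φ k τ) / Vc t with hΨ_def
  -- ====== properties of Ψ k given properties of uW k ======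
  have hΨfacts : ∀ k, ContinuousOn (uW k) (Icc 0 (s R)) →
      Continuous (Φ k) ∧ ContinuousOn (Ψ k) (Ici 0) ∧
      (∀ σ : ℝ, 0 < σ → ContinuousAt (Ψ k) σ) := by
    intro k hcont
    have hΦcont : Continuous (Φ k) := hcont.comp_continuous he_cont he_mem
    have hintg : Continuous (fun τ => Vc τ * Φ k τ) := hVc_cont.mul hΦcont
    have hAcont : Continuous (fun t => ∫ τ in (0:ℝ)..t, Vc τ * Φ k τ) :=
      intervalIntegral.continuous_primitive (fun a b => hintg.intervalIntegrable a b) 0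
    have hca : ∀ σ : ℝ, 0 < σ → ContinuousAt (Ψ k) σ := by
      intro σ hσ
      rw [hΨ_def]
      exact (hAcont.continuousAt).div (hVc_cont.continuousAt) (hVc_pos σ hσ).ne'
    refine ⟨hΦcont, ?_, hca⟩
    obtain ⟨M, hM⟩ := isCompact_Icc.exists_bound_of_continuousOn hcont
    have hMΦ : ∀ t, |Φ k t| ≤ M := by
      intro t
      have := hM (e t) (he_mem t)
      rwa [Real.norm_eq_abs] at this
    have hM0 : 0 ≤ M := le_trans (abs_nonneg _) (hMΦ 0)
    have hbd : ∀ t ∈ Ioc (0:ℝ) δ, |Ψ k t| ≤ M * 4 ^ (m-1) * t := by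
      intro t ht
      have htsR : t ∈ Icc (0:ℝ) (s R) := ⟨ht.1.le, ht.2.trans hδb⟩
      have hVt : (t/2) ^ (m-1) ≤ Vc t := by
        rw [hVc_eq t htsR]
        exact pow_le_pow_left₀ (by linarith [ht.1]) ((hWbd t ⟨ht.1.le, ht.2⟩).1) _
      have hVtpos : (0:ℝ) < (t/2) ^ (m-1) := pow_pos (by linarith [ht.1]) _
      have hnum : |∫ τ in (0:ℝ)..t, Vc τ * Φ k τ| ≤ M * ((2*t) ^ (m-1) * t) := by
        calc |∫ τ in (0:ℝ)..t, Vc τ * Φ k τ|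
            ≤ ∫ τ in (0:ℝ)..t, |Vc τ * Φ k τ| :=
              intervalIntegral.abs_integral_le_integral_abs ht.1.le
          _ ≤ ∫ τ in (0:ℝ)..t, Vc τ * M := by
              apply integral_mono_on ht.1.le (hintg.abs.intervalIntegrable 0 t)
                ((hVc_cont.mul continuous_const).intervalIntegrable 0 t)
              intro τ hτ
              rw [abs_mul, abs_of_nonneg (hVc_nonneg τ)]
              exact mul_le_mul_of_nonneg_left (hMΦ τ) (hVc_nonneg τ)
          _ = (∫ τ in (0:ℝ)..t, Vc τ) * M := integral_mul_const M Vc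
          _ ≤ ((2*t) ^ (m-1) * t) * M := by
              apply mul_le_mul_of_nonneg_right _ hM0
              calc ∫ τ in (0:ℝ)..t, Vc τ
                  ≤ ∫ τ in (0:ℝ)..t, (2*t) ^ (m-1) := by
                    apply integral_mono_on ht.1.le (hVc_cont.intervalIntegrable 0 t)
                      (intervalIntegrable_const)
                    intro τ hτ
                    have hτδ : τ ∈ Icc (0:ℝ) δ := ⟨hτ.1, hτ.2.trans ht.2⟩
                    have hτsR : τ ∈ Icc (0:ℝ) (s R) := ⟨hτ.1, hτδ.2.trans hδb⟩
                    rw [hVc_eq τ hτsR]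
                    apply pow_le_pow_left₀ (hWnonneg τ hτsR)
                    calc W τ ≤ 2*τ := (hWbd τ hτδ).2
                      _ ≤ 2*t := by linarith [hτ.2]
                _ = (t - 0) • ((2*t) ^ (m-1)) := integral_const _
                _ = (2*t) ^ (m-1) * t := by rw [smul_eq_mul]; ring
          _ = M * ((2*t) ^ (m-1) * t) := by ring
      have hΨabs : |Ψ k t| = |∫ τ in (0:ℝ)..t, Vc τ * Φ k τ| / Vc t := by
        rw [hΨ_def]
        simp only
        rw [abs_div, abs_of_pos (hVc_pos t ht.1)]
      rw [hΨabs]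
      calc |∫ τ in (0:ℝ)..t, Vc τ * Φ k τ| / Vc t
          ≤ (M * ((2*t) ^ (m-1) * t)) / ((t/2) ^ (m-1)) :=
            div_le_div₀ (mul_nonneg hM0 (mul_nonneg (pow_nonneg (by linarith [ht.1]) _) ht.1.le)) hnum hVtpos hVt
        _ = M * 4 ^ (m-1) * t := by
            have h2t : (2*t : ℝ) = 4 * (t/2) := by ring
            rw [h2t, mul_pow]
            rw [show M * (4 ^ (m-1) * (t/2) ^ (m-1) * t) / ((t/2) ^ (m-1))
                = M * 4 ^ (m-1) * t * ((t/2) ^ (m-1) / (t/2) ^ (m-1)) from by ring]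
            rw [div_self hVtpos.ne', mul_one]
    have h0 : ContinuousWithinAt (Ψ k) (Ici 0) 0 := by
      have hΨ0 : Ψ k 0 = 0 := by
        rw [hΨ_def]
        simp [intervalIntegral.integral_same]
      rw [ContinuousWithinAt, hΨ0]
      apply squeeze_zero_norm' (a := fun t : ℝ => M * 4 ^ (m-1) * t)
      · have hIoo : Iio δ ∈ nhdsWithin (0:ℝ) (Ici 0) :=
          nhdsWithin_le_nhds (Iio_mem_nhds hδ0)
        filter_upwards [hIoo, self_mem_nhdsWithin] with t ht1 ht2
        rcases eq_or_lt_of_le (mem_Ici.mp ht2) with rfl | htpos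
        · simp only [hΨ0, norm_zero, mul_zero]
          exact le_rfl
        · have := hbd t ⟨htpos, (le_of_lt ht1)⟩
          rwa [Real.norm_eq_abs]
      · have htend : Tendsto (fun t : ℝ => M * 4 ^ (m-1) * t) (nhds 0) (nhds (M * 4 ^ (m-1) * 0)) :=
          (continuous_const.mul continuous_id).tendsto 0
        rw [mul_zero] at htend
        exact htend.mono_left nhdsWithin_le_nhds
    intro x hx
    rcases eq_or_lt_of_le (mem_Ici.mp hx) with rfl | hxpos
    · exact h0
    · exact (hca x hxpos).continuousWithinAt
  -- ====== Ψ vanishes on nonpositives, global continuity ======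
  have hΨ0neg : ∀ (k : ℕ) (t : ℝ), t ≤ 0 → Ψ k t = 0 := by
    intro k t ht
    rw [hΨ_def]
    simp only
    have hVc0 : Vc t = 0 := by
      rw [hVc_def]
      simp only
      have het : e t = 0 := by
        rw [he_def]
        simp only
        rw [max_eq_left ((min_le_left t (s R)).trans ht)]
      rw [het, hW0]
      exact zero_pow (by omega)
    rw [hVc0, div_zero]
  have hΨcontG : ∀ k : ℕ, ContinuousOn (uW k) (Icc 0 (s R)) → Continuous (Ψ k) := by
    intro k hcont
    obtain ⟨hΦcont, hΨcOn, hΨca⟩ := hΨfacts k hcont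
    rw [continuous_iff_continuousAt]
    intro x
    rcases lt_trichotomy x 0 with hx | rfl | hx
    · have hev : Ψ k =ᶠ[nhds x] (fun _ => 0) := by
        filter_upwards [Iio_mem_nhds hx] with t ht
        exact hΨ0neg k t ht.le
      exact (continuousAt_congr hev).mpr continuousAt_const
    · refine continuousAt_iff_continuous_left_right.mpr ⟨?_, hΨcOn 0 Set.self_mem_Ici⟩
      exact continuousWithinAt_const.congr (fun y hy => hΨ0neg k y hy) (hΨ0neg k 0 le_rfl)
    · exact hΨca x hx
  -- ====== representation of uW (k+1) on [0, s R] ======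
  have hrep : ∀ (k : ℕ), ∀ x ∈ Icc (0:ℝ) (s R),
      uW (k+1) x = ((k:ℝ)+1) * ∫ t in x..(s R), Ψ k t := by
    intro k x hx
    rw [huWrec]
    congr 1
    apply intervalIntegral.integral_congr
    intro t ht
    rw [uIcc_of_le hx.2] at ht
    have htb : t ∈ Icc (0:ℝ) (s R) := ⟨hx.1.trans ht.1, ht.2⟩
    rw [hΨ_def]
    simp only
    congr 1
    · apply intervalIntegral.integral_congr
      intro τ hτ
      rw [uIcc_of_le htb.1] at hτ
      have hτb : τ ∈ Icc (0:ℝ) (s R) := ⟨hτ.1, hτ.2.trans htb.2⟩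
      show W τ ^ (m - 1) * uW k τ = Vc τ * Φ k τ
      rw [hVc_eq τ hτb, hΦ_def]
      simp only
      rw [he_id τ hτb]
    · exact (hVc_eq t htb).symm
  -- ====== main induction: properties of uW k ======
  have hmain : ∀ k : ℕ, ContinuousOn (uW k) (Icc 0 (s R)) ∧
      (∀ σ ∈ Icc (0:ℝ) (s R), 0 ≤ uW k σ) ∧
      (∀ σ ∈ Icc (0:ℝ) (s R), ∀ σ' ∈ Icc (0:ℝ) (s R), σ ≤ σ' → uW k σ' ≤ uW k σ) ∧
      (∀ σ ∈ Ico (0:ℝ) (s R), 0 < uW k σ) ∧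
      (1 ≤ k → ∀ σ ∈ Icc (0:ℝ) (s R), ∀ σ' ∈ Icc (0:ℝ) (s R), σ < σ' → uW k σ' < uW k σ) := by
    intro k
    induction k with
    | zero =>
      have h0 : uW 0 = fun _ => 1 := funext huW0
      rw [h0]
      exact ⟨continuousOn_const, fun σ _ => zero_le_one, fun _ _ _ _ _ => le_rfl,
        fun σ _ => zero_lt_one, fun hcon => absurd hcon (by norm_num)⟩
    | succ k ih =>
      obtain ⟨hcont, hnn, hanti, hpos, _⟩ := ih
      obtain ⟨hΦcont, hΨcOn, hΨca⟩ := hΨfacts k hcont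
      have hΨcont : Continuous (Ψ k) := hΨcontG k hcont
      have hsplit : ∀ x : ℝ, (∫ t in x..(s R), Ψ k t)
          = (∫ t in (0:ℝ)..(s R), Ψ k t) - ∫ t in (0:ℝ)..x, Ψ k t := by
        intro x
        have := integral_add_adjacent_intervals
          (hΨcont.intervalIntegrable (μ := volume) 0 x)
          (hΨcont.intervalIntegrable (μ := volume) x (s R))
        linarith
      have hΨnn : ∀ t : ℝ, 0 ≤ t → 0 ≤ Ψ k t := by
        intro t ht
        rw [hΨ_def]
        simp only
        apply div_nonneg _ (hVc_nonneg t)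
        apply intervalIntegral.integral_nonneg ht
        intro τ _
        exact mul_nonneg (hVc_nonneg τ) (hnn (e τ) (he_mem τ))
      have hΨpos : ∀ t ∈ Ioc (0:ℝ) (s R), 0 < Ψ k t := by
        intro t ht
        rw [hΨ_def]
        simp only
        apply div_pos _ (hVc_pos t ht.1)
        apply intervalIntegral_pos_of_pos_on
          ((hVc_cont.mul hΦcont).intervalIntegrable 0 t) _ ht.1
        intro τ hτ
        have hτb : τ ∈ Icc (0:ℝ) (s R) := ⟨hτ.1.le, hτ.2.le.trans ht.2⟩
        apply mul_pos (hVc_pos τ hτ.1)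
        rw [hΦ_def]
        simp only
        rw [he_id τ hτb]
        exact hpos τ ⟨hτ.1.le, lt_of_lt_of_le hτ.2 ht.2⟩
      have hnn' : ∀ σ ∈ Icc (0:ℝ) (s R), 0 ≤ uW (k+1) σ := by
        intro σ hσ
        rw [hrep k σ hσ]
        apply mul_nonneg (by positivity)
        apply intervalIntegral.integral_nonneg hσ.2
        intro u hu
        exact hΨnn u (hσ.1.trans hu.1)
      refine ⟨?_, hnn', ?_, ?_, ?_⟩
      · have hFc : ContinuousOn (fun x => ((k:ℝ)+1) *
            ((∫ t in (0:ℝ)..(s R), Ψ k t) - ∫ t in (0:ℝ)..x, Ψ k t)) (Icc 0 (s R)) :=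
          (continuous_const.mul (continuous_const.sub
            (intervalIntegral.continuous_primitive
              (fun a b => hΨcont.intervalIntegrable a b) 0))).continuousOn
        exact hFc.congr (fun x hx => by rw [hrep k x hx, hsplit x])
      · intro σ hσ σ' hσ' hle
        rw [hrep k σ hσ, hrep k σ' hσ']
        apply mul_le_mul_of_nonneg_left _ (by positivity)
        have hadd := integral_add_adjacent_intervals
          (hΨcont.intervalIntegrable (μ := volume) σ σ')
          (hΨcont.intervalIntegrable (μ := volume) σ' (s R))
        have hmid : 0 ≤ ∫ t in σ..σ', Ψ k t := by
          apply intervalIntegral.integral_nonneg hle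
          intro u hu
          exact hΨnn u (hσ.1.trans hu.1)
        linarith
      · intro σ hσ
        rw [hrep k σ ⟨hσ.1, hσ.2.le⟩]
        apply mul_pos (by positivity)
        apply intervalIntegral_pos_of_pos_on (hΨcont.intervalIntegrable σ (s R)) _ hσ.2
        intro t ht
        exact hΨpos t ⟨hσ.1.trans_lt ht.1, ht.2.le⟩
      · intro _ σ hσ σ' hσ' hlt
        rw [hrep k σ hσ, hrep k σ' hσ']
        apply mul_lt_mul_of_pos_left _ (by positivity)
        have hadd := integral_add_adjacent_intervals
          (hΨcont.intervalIntegrable (μ := volume) σ σ')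
          (hΨcont.intervalIntegrable (μ := volume) σ' (s R))
        have hmid : 0 < ∫ t in σ..σ', Ψ k t := by
          apply intervalIntegral_pos_of_pos_on (hΨcont.intervalIntegrable σ σ') _ hlt
          intro t ht
          exact hΨpos t ⟨hσ.1.trans_lt ht.1, ht.2.le.trans hσ'.2⟩
        linarith
  -- ====== derivative of uW (k+1) within [0, s R] ======
  have hΨc : ∀ k : ℕ, Continuous (Ψ k) := fun k => hΨcontG k (hmain k).1
  have hsplit : ∀ (k : ℕ) (x : ℝ), (∫ t in x..(s R), Ψ k t)
      = (∫ t in (0:ℝ)..(s R), Ψ k t) - ∫ t in (0:ℝ)..x, Ψ k t := by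
    intro k x
    have := integral_add_adjacent_intervals
      ((hΨc k).intervalIntegrable (μ := volume) 0 x)
      ((hΨc k).intervalIntegrable (μ := volume) x (s R))
    linarith
  have hderivU : ∀ (k : ℕ), ∀ σ ∈ Ioc (0:ℝ) (s R),
      HasDerivWithinAt (uW (k+1)) (-(((k:ℝ)+1) * Ψ k σ)) (Icc 0 (s R)) σ := by
    intro k σ hσ
    have hΨcont := hΨc k
    have hFTC : HasDerivAt (fun x => ∫ t in (0:ℝ)..x, Ψ k t) (Ψ k σ) σ :=
      integral_hasDerivAt_right (hΨcont.intervalIntegrable 0 σ)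
        (hΨcont.stronglyMeasurableAtFilter _ _) hΨcont.continuousAt
    have hG : HasDerivAt (fun x => ((k:ℝ)+1) *
        ((∫ t in (0:ℝ)..(s R), Ψ k t) - ∫ t in (0:ℝ)..x, Ψ k t))
        (((k:ℝ)+1) * (0 - Ψ k σ)) σ := ((hasDerivAt_const σ _).sub hFTC).const_mul _
    rw [zero_sub, mul_neg] at hG
    apply hG.hasDerivWithinAt.congr
    · intro y hy
      rw [hrep k y hy, hsplit k y]
    · rw [hrep k σ (Ioc_subset_Icc_self hσ), hsplit k σ]
  -- ====== conclusion ======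
  intro k hk r hr
  obtain ⟨j, rfl⟩ : ∃ j, k = j + 1 := ⟨k - 1, (Nat.succ_pred_eq_of_pos hk).symm⟩
  simp only [Nat.add_sub_cancel]
  push_cast
  have hrIcc : r ∈ Icc (0:ℝ) R := Ioc_subset_Icc_self hr
  have hσ : s r ∈ Ioc (0:ℝ) (s R) := hsIoc r hr
  have hσIcc : s r ∈ Icc (0:ℝ) (s R) := Ioc_subset_Icc_self hσ
  obtain ⟨hcontj, hnnj, hantij, hposj, hstrictj⟩ := hmain j
  obtain ⟨hΦcont, -, -⟩ := hΨfacts j hcontj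
  have hgr : 0 < g r := hgpos r hrIcc
  have hΛr : 0 < Λ r := hΛpos r hr
  have hden : 0 < Λ r * g r := mul_pos hΛr hgr
  have hVσ : Vc (s r) = Λ r := by rw [hVc_eq _ hσIcc, hΛeq r hr]
  -- derivative of f (j+1)
  have hD0 : HasDerivWithinAt (uW (j+1)) (-(((j:ℝ)+1) * Ψ j (s r))) (Icc 0 (s R)) (s r) :=
    hderivU j (s r) hσ
  have hDs : HasDerivWithinAt s (1 / g r) (Icc 0 R) r := (hs_deriv r hrIcc).hasDerivWithinAt
  have hcomp : HasDerivWithinAt (uW (j+1) ∘ s)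
      (-(((j:ℝ)+1) * Ψ j (s r)) * (1 / g r)) (Icc 0 R) r :=
    hD0.comp r hDs (fun x hx => hmaps x hx)
  have hfk : HasDerivWithinAt (f (j+1))
      (-(((j:ℝ)+1) * Ψ j (s r)) * (1 / g r)) (Icc 0 R) r := by
    apply hcomp.congr
    · intro y _
      exact hf (j+1) y
    · exact hf (j+1) r
  have hDW : derivWithin (f (j+1)) (Icc 0 R) r
      = -(((j:ℝ)+1) * Ψ j (s r)) * (1 / g r) :=
    hfk.derivWithin ((uniqueDiffOn_Icc hR) r hrIcc)
  set Num := ∫ τ in (0:ℝ)..(s r), Vc τ * Φ j τ with hNum_def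
  have hΨval : Ψ j (s r) = Num / Λ r := by
    rw [hΨ_def]
    simp only
    rw [hNum_def, hVσ]
  have hintVΦ : IntervalIntegrable (fun t => Vc t * Φ j t) volume 0 (s r) :=
    (hVc_cont.mul hΦcont).intervalIntegrable _ _
  have hintcV : IntervalIntegrable (fun t => uW j (s r) * Vc t) volume 0 (s r) :=
    (continuous_const.mul hVc_cont).intervalIntegrable _ _
  -- substitution
  have hsubst : Num = ∫ t in (0:ℝ)..r, (Λ t / g t) * f j t := by
    have hcs : (∫ x in (0:ℝ)..r, (1 / g x) • ((fun σ => Vc σ * Φ j σ) ∘ s) x)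
        = ∫ x in (s 0)..(s r), Vc x * Φ j x := by
      apply intervalIntegral.integral_comp_smul_deriv
      · intro x hx
        rw [uIcc_of_le hr.1.le] at hx
        exact hs_deriv x ⟨hx.1, hx.2.trans hr.2⟩
      · rw [uIcc_of_le hr.1.le]
        exact hginv_contOn (Icc_subset_Icc le_rfl hr.2)
      · exact hVc_cont.mul hΦcont
    rw [hs0] at hcs
    rw [hNum_def, ← hcs]
    apply intervalIntegral.integral_congr_ae
    apply Filter.Eventually.of_forall
    intro x hx
    rw [uIoc_of_le hr.1.le] at hx
    have hxI : x ∈ Ioc (0:ℝ) R := ⟨hx.1, hx.2.trans hr.2⟩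
    have hsx : s x ∈ Ioc (0:ℝ) (s R) := hsIoc x hxI
    show (1 / g x) * (Vc (s x) * Φ j (s x)) = (Λ x / g x) * f j x
    rw [hVc_eq _ (Ioc_subset_Icc_self hsx), hΛeq x hxI, hΦ_def]
    simp only
    rw [he_id _ (Ioc_subset_Icc_self hsx), hf j x]
    ring
  have hQc : (∫ t in (0:ℝ)..(s r), W t ^ (m - 1)) = ∫ t in (0:ℝ)..(s r), Vc t := by
    apply intervalIntegral.integral_congr
    intro t ht
    rw [uIcc_of_le hσ.1.le] at ht
    show W t ^ (m - 1) = Vc t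
    exact (hVc_eq t ⟨ht.1, ht.2.trans hσ.2⟩).symm
  -- monotonicity comparison
  have hmono : uW j (s r) * (∫ t in (0:ℝ)..(s r), Vc t) ≤ Num := by
    rw [hNum_def, ← intervalIntegral.integral_const_mul]
    apply integral_mono_on hσ.1.le hintcV hintVΦ
    intro t ht
    have htb : t ∈ Icc (0:ℝ) (s R) := ⟨ht.1, ht.2.trans hσ.2⟩
    show uW j (s r) * Vc t ≤ Vc t * Φ j t
    rw [hΦ_def]
    simp only
    rw [he_id t htb, mul_comm]
    exact mul_le_mul_of_nonneg_left (hantij t htb (s r) hσIcc ht.2) (hVc_nonneg t)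
  have hstrict : 1 ≤ j → uW j (s r) * (∫ t in (0:ℝ)..(s r), Vc t) < Num := by
    intro hj1
    have hdiff : 0 < ∫ t in (0:ℝ)..(s r), (Vc t * Φ j t - uW j (s r) * Vc t) := by
      apply intervalIntegral_pos_of_pos_on (hintVΦ.sub hintcV) _ hσ.1
      intro t ht
      have htb : t ∈ Icc (0:ℝ) (s R) := ⟨ht.1.le, ht.2.le.trans hσ.2⟩
      have hΦt : Φ j t = uW j t := by
        rw [hΦ_def]
        simp only
        rw [he_id t htb]
      rw [hΦt]
      have hlt : uW j (s r) < uW j t := hstrictj hj1 t htb (s r) hσIcc ht.2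
      have hv := hVc_pos t ht.1
      nlinarith
    rw [integral_sub hintVΦ hintcV, intervalIntegral.integral_const_mul] at hdiff
    rw [hNum_def]
    linarith
  have hLHS : derivWithin (f (j+1)) (Icc 0 R) r = -((j:ℝ)+1) * Num / (Λ r * g r) := by
    rw [hDW, hΨval]
    field_simp
  have hRHS : -((j:ℝ)+1) * f j r
        * ((∫ t in (0:ℝ)..(s r), W t ^ (m - 1)) / W (s r) ^ (m - 1)) / g r
      = -((j:ℝ)+1) * (uW j (s r) * ∫ t in (0:ℝ)..(s r), Vc t) / (Λ r * g r) := by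
    rw [hΛeq r hr, hf j r, hQc]
    field_simp
  refine ⟨?_, ?_, ?_, ?_⟩
  · rw [hLHS, ← hsubst]
  · rw [hLHS, hRHS]
    exact (div_le_div_iff_of_pos_right hden).mpr
      (mul_le_mul_of_nonpos_left hmono (neg_nonpos.mpr (by positivity)))
  · intro hk1
    have hj0 : j = 0 := by omega
    subst hj0
    have hNum0 : Num = ∫ t in (0:ℝ)..(s r), Vc t := by
      rw [hNum_def]
      apply intervalIntegral.integral_congr
      intro τ _
      show Vc τ * Φ 0 τ = Vc τ
      rw [hΦ_def]
      simp only
      rw [huW0, mul_one]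
    rw [hLHS, hRHS, hNum0, huW0, one_mul]
  · intro hk2
    have hj1 : 1 ≤ j := by omega
    rw [hLHS, hRHS]
    exact (div_lt_div_iff_of_pos_right hden).mpr
      (mul_lt_mul_of_neg_left (hstrict hj1)
        (neg_neg_iff_pos.mpr (by positivity)))
end

section
/- Assume the model C^m_{w,g,h} is w-balanced, i.e. q_W(σ)(η_w(r(σ)) − h(r(σ))) ≥ g(r(σ))/m for all σ ∈ (0, s(R)]. Then for every integer k ≥ 1 and every r ∈ (0, R): f_k''(r) − f_k'(r) η_w(r) ≥ 0. If moreover k ≥ 2, or the balance condition holds strictly (q_W(σ)(η_w(r(σ)) − h(r(σ))) > g(r(σ))/m for all σ ∈ (0, s(R)]), then the inequality is strict: f_k''(r) − f_k'(r) η_w(r) > 0 for all r ∈ (0, R). -/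
set_option maxHeartbeats 1000000

open Set MeasureTheory intervalIntegral Filter

lemma intervalIntegrable_of_bdd_cont {f : ℝ → ℝ} {b C : ℝ} (hb : 0 ≤ b)
    (hc : ContinuousOn f (Set.Ioc 0 b)) (hC : ∀ t ∈ Set.Ioc (0:ℝ) b, |f t| ≤ C) :
    IntervalIntegrable f MeasureTheory.volume 0 b := by
  rw [intervalIntegrable_iff_integrableOn_Ioc_of_le hb]
  have hmeas : AEStronglyMeasurable f (volume.restrict (Set.Ioc 0 b)) :=
    hc.aestronglyMeasurable measurableSet_Ioc
  refine Integrable.mono' (integrable_const C) hmeas ?_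
  refine (ae_restrict_iff' measurableSet_Ioc).2 (Filter.Eventually.of_forall ?_)
  intro t ht; simpa [Real.norm_eq_abs] using hC t ht

/-- key lemma: If the isoperimetric comparison space
`C^m_{w,g,h}` is `w`-balanced, i.e.
`q_W(σ)(η_w(r(σ)) - h(r(σ))) ≥ g(r(σ))/m` for all `σ ∈ (0, s(R)]`, then for
every `k ≥ 1` one has `f_k''(r) - f_k'(r) η_w(r) ≥ 0` on `(0,R)`; and if
`k ≥ 2` or the balance condition is strict, the inequality is strict. -/
theorem comparison_space_key_lemma
    (m : ℕ) (hm : 2 ≤ m) (R : ℝ) (hR : 0 < R)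
    (w : ℝ → ℝ) (hw : ContDiff ℝ (⊤ : ℕ∞) w) (hw0 : w 0 = 0)
    (hw'0 : deriv w 0 = 1) (hwpos : ∀ r ∈ Set.Ioc (0 : ℝ) R, 0 < w r)
    (g : ℝ → ℝ) (hg : ContDiff ℝ (⊤ : ℕ∞) g) (hg0 : g 0 = 1)
    (hgpos : ∀ r ∈ Set.Icc (0 : ℝ) R, 0 < g r)
    (hgle : ∀ r ∈ Set.Icc (0 : ℝ) R, g r ≤ 1)
    (h : ℝ → ℝ) (hh : ContDiff ℝ (⊤ : ℕ∞) h)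
    (s : ℝ → ℝ) (hs : ∀ r : ℝ, s r = ∫ t in (0 : ℝ)..r, 1 / g t)
    (ρ : ℝ → ℝ) (hρs : ∀ r ∈ Set.Icc (0 : ℝ) R, ρ (s r) = r)
    (hsρ : ∀ σ ∈ Set.Icc (0 : ℝ) (s R), s (ρ σ) = σ ∧ ρ σ ∈ Set.Icc (0 : ℝ) R)
    (Λ : ℝ → ℝ) (hΛpos : ∀ r ∈ Set.Ioc (0 : ℝ) R, 0 < Λ r)
    (hΛC1 : ContDiffOn ℝ 1 Λ (Set.Ioc (0 : ℝ) R))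
    (hΛode : ∀ r ∈ Set.Ioc (0 : ℝ) R,
      HasDerivWithinAt (fun t => Λ t * w t * g t)
        ((m : ℝ) * (Λ r / g r) * (deriv w r - h r * w r)) (Set.Ioc (0 : ℝ) R) r)
    (hΛnorm : Filter.Tendsto (fun r => Λ r / r ^ (m - 1))
      (nhdsWithin (0 : ℝ) (Set.Ioi 0)) (nhds 1))
    (W : ℝ → ℝ) (hW0 : W 0 = 0)
    (hWdef : ∀ σ ∈ Set.Ioc (0 : ℝ) (s R), W σ = Λ (ρ σ) ^ (((m : ℝ) - 1)⁻¹))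
(hWsmooth : ContDiffOn ℝ (⊤ : ℕ∞) W (Set.Icc (0 : ℝ) (s R)))
    (hW'0 : derivWithin W (Set.Icc (0 : ℝ) (s R)) 0 = 1)
(uW : ℕ → ℝ → ℝ) (huW0 : ∀ σ : ℝ, uW 0 σ = 1)
    (huWrec : ∀ (k : ℕ) (σ : ℝ), uW (k + 1) σ =
      ((k : ℝ) + 1) *
        ∫ t in σ..(s R), (∫ τ in (0 : ℝ)..t, W τ ^ (m - 1) * uW k τ) / W t ^ (m - 1))
    (f : ℕ → ℝ → ℝ) (hf : ∀ (k : ℕ) (r : ℝ), f k r = uW k (s r))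
    (hbal : ∀ σ ∈ Set.Ioc (0 : ℝ) (s R),
      g (ρ σ) / (m : ℝ) ≤
        ((∫ t in (0 : ℝ)..σ, W t ^ (m - 1)) / W σ ^ (m - 1)) *
          (deriv w (ρ σ) / w (ρ σ) - h (ρ σ))) :
    ∀ k : ℕ, 1 ≤ k →
      (∀ r ∈ Set.Ioo (0 : ℝ) R,
        0 ≤ deriv (deriv (f k)) r - deriv (f k) r * (deriv w r / w r)) ∧
      ((2 ≤ k ∨
          (∀ σ ∈ Set.Ioc (0 : ℝ) (s R),
            g (ρ σ) / (m : ℝ) <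
              ((∫ t in (0 : ℝ)..σ, W t ^ (m - 1)) / W σ ^ (m - 1)) *
                (deriv w (ρ σ) / w (ρ σ) - h (ρ σ)))) →
        ∀ r ∈ Set.Ioo (0 : ℝ) R,
          0 < deriv (deriv (f k)) r - deriv (f k) r * (deriv w r / w r)) := by
  have hn0 : m - 1 ≠ 0 := by omega
  have hnR : ((m - 1 : ℕ) : ℝ) = (m : ℝ) - 1 := by
    push_cast [Nat.cast_sub (by omega : 1 ≤ m)]; ring
  have hgc : Continuous g := hg.continuous
  have hwc : Continuous w := hw.continuous
  -- inverse of g continuous on Icc 0 R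
  have hinvc : ContinuousOn (fun t => 1 / g t) (Icc 0 R) :=
    continuousOn_const.div hgc.continuousOn (fun x hx => (hgpos x hx).ne')
  have hs0 : s 0 = 0 := by rw [hs]; simp
  -- integrability of 1/g on subintervals
  have hint1g : ∀ a b, a ∈ Icc (0:ℝ) R → b ∈ Icc (0:ℝ) R → a ≤ b →
      IntervalIntegrable (fun t => 1 / g t) volume a b := by
    intro a b ha hb hab
    exact (hinvc.mono (Icc_subset_Icc ha.1 hb.2)).intervalIntegrable_of_Icc hab
  -- strict monotonicity of s
  have hsub : ∀ a b, a ∈ Icc (0:ℝ) R → b ∈ Icc (0:ℝ) R → a ≤ b →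
      s b - s a = ∫ t in a..b, 1 / g t := by
    intro a b ha hb hab
    rw [hs a, hs b]
    have hadd := intervalIntegral.integral_add_adjacent_intervals
      (hint1g 0 a ⟨le_rfl, hR.le⟩ ha ha.1)
      (hint1g a b ha hb hab)
    linarith [hadd]
  have hsmono : ∀ a b, a ∈ Icc (0:ℝ) R → b ∈ Icc (0:ℝ) R → a < b → s a < s b := by
    intro a b ha hb hab
    have := hsub a b ha hb hab.le
    have hpos : 0 < ∫ t in a..b, 1 / g t := by
      apply intervalIntegral_pos_of_pos_on (hint1g a b ha hb hab.le)
      · intro x hx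
        have hx' : x ∈ Icc (0:ℝ) R := ⟨le_trans ha.1 hx.1.le, le_trans hx.2.le hb.2⟩
        have := hgpos x hx'
        positivity
      · exact hab
    linarith
  have hsmono' : ∀ a b, a ∈ Icc (0:ℝ) R → b ∈ Icc (0:ℝ) R → a ≤ b → s a ≤ s b := by
    intro a b ha hb hab
    rcases eq_or_lt_of_le hab with rfl | hlt
    · exact le_refl _
    · exact (hsmono a b ha hb hlt).le
  set S := s R with hSdef
  have hSpos : 0 < S := by
    have := hsmono 0 R ⟨le_rfl, hR.le⟩ ⟨hR.le, le_rfl⟩ hR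
    rwa [hs0] at this
  have hsmem : ∀ r ∈ Ioc (0:ℝ) R, s r ∈ Ioc 0 S := by
    intro r hr
    constructor
    · have := hsmono 0 r ⟨le_rfl, hr.2.trans_lt' hr.1 |>.le⟩ ⟨hr.1.le, hr.2⟩ hr.1
      rwa [hs0] at this
    · exact hsmono' r R ⟨hr.1.le, hr.2⟩ ⟨hR.le, le_rfl⟩ hr.2
  have hsmemo : ∀ r ∈ Ioo (0:ℝ) R, s r ∈ Ioo 0 S := by
    intro r hr
    exact ⟨(hsmem r ⟨hr.1, hr.2.le⟩).1, hsmono r R ⟨hr.1.le, hr.2.le⟩ ⟨hR.le, le_rfl⟩ hr.2⟩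
  -- derivative of s
  have hsderiv : ∀ r ∈ Ioo (0:ℝ) R, HasDerivAt s (1 / g r) r := by
    intro r hr
    have heq : s = fun u => ∫ t in (0:ℝ)..u, 1 / g t := funext hs
    rw [heq]
    apply intervalIntegral.integral_hasDerivAt_right
      (hint1g 0 r ⟨le_rfl, hR.le⟩ ⟨hr.1.le, hr.2.le⟩ hr.1.le)
    · exact AEStronglyMeasurable.stronglyMeasurableAtFilter_of_mem
        (hinvc.aestronglyMeasurable measurableSet_Icc) (Icc_mem_nhds hr.1 hr.2)
    · exact ContinuousAt.div continuousAt_const hgc.continuousAt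
        (hgpos r ⟨hr.1.le, hr.2.le⟩).ne'
  -- W basic facts
  have hWpos : ∀ σ ∈ Ioc (0:ℝ) S, 0 < W σ := by
    intro σ hσ
    obtain ⟨hsρσ, hρmem⟩ := hsρ σ ⟨hσ.1.le, hσ.2⟩
    have hρpos : 0 < ρ σ := by
      rcases eq_or_lt_of_le hρmem.1 with heq | hlt
      · exfalso; rw [← heq] at hsρσ; rw [← hsρσ, hs0] at hσ; exact lt_irrefl _ hσ.1
      · exact hlt
    rw [hWdef σ hσ]
    exact Real.rpow_pos_of_pos (hΛpos _ ⟨hρpos, hρmem.2⟩) _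
  have hWcont : ContinuousOn W (Icc 0 S) := hWsmooth.continuousOn
  have hWdiff : ∀ σ ∈ Ioo (0:ℝ) S, HasDerivAt W (deriv W σ) σ := by
    intro σ hσ
    have : DifferentiableAt ℝ W σ :=
      ((hWsmooth.differentiableOn (by norm_num)) σ ⟨hσ.1.le, hσ.2.le⟩).differentiableAt
        (Icc_mem_nhds hσ.1 hσ.2)
    exact this.hasDerivAt
  -- upper bound W t ≤ L t
  have hWd : DifferentiableOn ℝ W (Icc 0 S) := hWsmooth.differentiableOn (by norm_num)
  obtain ⟨L0, hL0⟩ := isCompact_Icc.exists_bound_of_continuousOn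
    (hWsmooth.continuousOn_derivWithin (uniqueDiffOn_Icc hSpos) (by norm_num))
  set L := max L0 1 with hLdef
  have hL1 : 0 < L := lt_of_lt_of_le one_pos (le_max_right _ _)
  have hWub : ∀ t ∈ Icc (0:ℝ) S, W t ≤ L * t := by
    intro t ht
    have := Convex.norm_image_sub_le_of_norm_derivWithin_le hWd
      (fun x hx => le_trans (hL0 x hx) (le_max_left L0 1)) (convex_Icc 0 S)
      (⟨le_rfl, hSpos.le⟩ : (0:ℝ) ∈ Icc (0:ℝ) S) ht
    rw [hW0, sub_zero, sub_zero, Real.norm_eq_abs, Real.norm_eq_abs,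
      abs_of_nonneg ht.1] at this
    exact le_trans (le_abs_self _) this
  -- lower bound c * t ≤ W t
  have hW'0' : HasDerivWithinAt W 1 (Icc 0 S) 0 := by
    have hd := (hWd 0 ⟨le_rfl, hSpos.le⟩).hasDerivWithinAt
    rwa [hW'0] at hd
  obtain ⟨c, hc, hWlb⟩ : ∃ c, 0 < c ∧ ∀ t ∈ Ioc (0:ℝ) S, c * t ≤ W t := by
    have hslope : Filter.Tendsto (fun t => W t / t) (nhdsWithin 0 (Ioi 0)) (nhds 1) := by
      have h1 : Filter.Tendsto (slope W 0) (nhdsWithin 0 (Icc 0 S \ {0})) (nhds 1) :=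
        hasDerivWithinAt_iff_tendsto_slope.mp hW'0'
      have h2 : Filter.Tendsto (slope W 0) (nhdsWithin 0 (Ioc 0 S)) (nhds 1) :=
        h1.mono_left (nhdsWithin_mono 0 (fun x hx => ⟨⟨hx.1.le, hx.2⟩, ne_of_gt hx.1⟩))
      rw [nhdsWithin_Ioc_eq_nhdsGT hSpos] at h2
      refine h2.congr' ?_
      filter_upwards [self_mem_nhdsWithin] with t ht
      simp [slope_def_field, hW0]
    have hev : ∀ᶠ t in nhdsWithin 0 (Ioi 0), (1:ℝ)/2 < W t / t :=
      hslope.eventually (eventually_gt_nhds (by norm_num))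
    obtain ⟨u, hu⟩ := hev.exists_mem
    obtain ⟨δ, hδpos, hδsub⟩ := (mem_nhdsGT_iff_exists_Ioc_subset).mp hu.1
    set δ' := min δ S with hδ'
    have hδ'pos : 0 < δ' := lt_min (mem_Ioi.mp hδpos) hSpos
    obtain ⟨z, hz, hzmin⟩ := isCompact_Icc.exists_isMinOn
      (nonempty_Icc.mpr (min_le_right δ S)) (hWcont.mono (Icc_subset_Icc hδ'pos.le le_rfl))
    have hWz : 0 < W z := hWpos z ⟨lt_of_lt_of_le hδ'pos hz.1, hz.2⟩
    refine ⟨min (1/2) (W z / S), lt_min (by norm_num) (div_pos hWz hSpos), ?_⟩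
    intro t ht
    rcases le_or_gt t δ' with hle | hgt
    · have h2 : (1:ℝ)/2 < W t / t := hu.2 t (hδsub ⟨ht.1, le_trans hle (min_le_left _ _)⟩)
      have : min (1/2) (W z / S) * t ≤ (1/2) * t :=
        mul_le_mul_of_nonneg_right (min_le_left _ _) ht.1.le
      calc min (1/2) (W z / S) * t ≤ (1/2) * t := this
        _ ≤ W t := by rw [div_lt_div_iff₀] at h2 <;> nlinarith [ht.1]
    · have h3 : W z ≤ W t := hzmin ⟨hgt.le, ht.2⟩
      calc min (1/2) (W z / S) * t ≤ (W z / S) * t :=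
            mul_le_mul_of_nonneg_right (min_le_right _ _) ht.1.le
        _ ≤ (W z / S) * S := by
            apply mul_le_mul_of_nonneg_left ht.2 (div_pos hWz hSpos).le
        _ = W z := by field_simp
        _ ≤ W t := h3
  -- nonnegativity of W
  have hWnn : ∀ t ∈ Icc (0:ℝ) S, 0 ≤ W t := by
    intro t ht
    rcases eq_or_lt_of_le ht.1 with heq | hlt
    · rw [← heq, hW0]
    · exact (hWpos t ⟨hlt, ht.2⟩).le
  -- the auxiliary functions
  set A : ℕ → ℝ → ℝ := fun k t => ∫ τ in (0:ℝ)..t, W τ ^ (m - 1) * uW k τ with hAdef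
  set F : ℕ → ℝ → ℝ := fun k t => A k t / W t ^ (m - 1) with hFdef
  have hrec : ∀ (k : ℕ) (σ : ℝ), uW (k + 1) σ = ((k:ℝ) + 1) * ∫ t in σ..S, F k t := by
    intro k σ; rw [huWrec]
  -- the induction predicate
  have hFfacts : ∀ k : ℕ,
      ContinuousOn (uW k) (Icc 0 S) →
      (∀ σ ∈ Ico (0:ℝ) S, 0 < uW k σ) →
      (∀ σ ∈ Icc (0:ℝ) S, 0 ≤ uW k σ) →
      AntitoneOn (uW k) (Icc 0 S) →
      ((∀ a b, 0 ≤ a → a ≤ b → b ≤ S → IntervalIntegrable (F k) volume a b) ∧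
       ContinuousOn (F k) (Ioc 0 S) ∧
       (∀ t ∈ Ioc (0:ℝ) S, 0 < F k t) ∧
       (∀ t ∈ Icc (0:ℝ) S, 0 ≤ F k t) ∧
       (∀ a b, 0 ≤ a → a ≤ b → b ≤ S →
         IntervalIntegrable (fun τ => W τ ^ (m - 1) * uW k τ) volume a b) ∧
       ContinuousOn (A k) (Icc 0 S) ∧
       (∀ t ∈ Ioc (0:ℝ) S, 0 < A k t)) := by
    intro k qc qpos qnn qanti
    have hWUc : ContinuousOn (fun τ => W τ ^ (m - 1) * uW k τ) (Icc 0 S) :=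
      (hWcont.pow _).mul qc
    have hUint : ∀ a b, 0 ≤ a → a ≤ b → b ≤ S →
        IntervalIntegrable (fun τ => W τ ^ (m - 1) * uW k τ) volume a b := by
      intro a b ha hab hb
      exact (hWUc.mono (Icc_subset_Icc ha (le_trans (le_refl b) hb))).intervalIntegrable_of_Icc hab
    have hAcont : ContinuousOn (A k) (Icc 0 S) := by
      have := intervalIntegral.continuousOn_primitive_interval'
        (hUint 0 S le_rfl hSpos.le le_rfl) (left_mem_uIcc (a := (0:ℝ)) (b := S))
      rwa [uIcc_of_le hSpos.le] at this
    have hApos : ∀ t ∈ Ioc (0:ℝ) S, 0 < A k t := by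
      intro t ht
      apply intervalIntegral_pos_of_pos_on (hUint 0 t le_rfl ht.1.le ht.2)
      · intro x hx
        have hx1 : x ∈ Ioc (0:ℝ) S := ⟨hx.1, le_trans hx.2.le ht.2⟩
        have hx2 : x ∈ Ico (0:ℝ) S := ⟨hx.1.le, lt_of_lt_of_le hx.2 ht.2⟩
        exact mul_pos (pow_pos (hWpos x hx1) _) (qpos x hx2)
      · exact ht.1
    have hFcont : ContinuousOn (F k) (Ioc 0 S) :=
      (hAcont.mono Ioc_subset_Icc_self).div
        ((hWcont.pow _).mono Ioc_subset_Icc_self)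
        (fun t ht => (pow_pos (hWpos t ht) _).ne')
    have hFpos : ∀ t ∈ Ioc (0:ℝ) S, 0 < F k t := fun t ht =>
      div_pos (hApos t ht) (pow_pos (hWpos t ht) _)
    have hFnn : ∀ t ∈ Icc (0:ℝ) S, 0 ≤ F k t := by
      intro t ht
      rcases eq_or_lt_of_le ht.1 with heq | hlt
      · rw [hFdef]
        simp only [← heq]
        rw [hAdef]
        simp
      · exact (hFpos t ⟨hlt, ht.2⟩).le
    -- boundedness of F k near 0 and integrability
    obtain ⟨M, hM⟩ := isCompact_Icc.exists_bound_of_continuousOn qc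
    have hFbd : ∀ t ∈ Ioc (0:ℝ) S, |F k t| ≤ (L ^ (m-1) * M / c ^ (m-1)) * S := by
      intro t ht
      have htpos := ht.1
      have hAbd : |A k t| ≤ (L ^ (m-1) * M) * t ^ (m-1) * t := by
        have := intervalIntegral.norm_integral_le_of_norm_le_const
          (C := (L*t) ^ (m-1) * M) (f := fun τ => W τ ^ (m - 1) * uW k τ)
          (a := 0) (b := t) ?_
        · rw [Real.norm_eq_abs] at this
          calc |A k t| ≤ (L*t) ^ (m-1) * M * |t - 0| := this
            _ = (L ^ (m-1) * M) * t ^ (m-1) * t := by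
                rw [mul_pow, sub_zero, abs_of_pos htpos]; ring
        · intro x hx
          rw [uIoc_of_le htpos.le] at hx
          have hx' : x ∈ Icc (0:ℝ) S := ⟨hx.1.le, le_trans hx.2 ht.2⟩
          rw [Real.norm_eq_abs, abs_mul, abs_pow, abs_of_nonneg (hWnn x hx')]
          have h1 : W x ≤ L * t :=
            le_trans (hWub x hx') (mul_le_mul_of_nonneg_left hx.2 hL1.le)
          have h2 : |uW k x| ≤ M := by
            have := hM x hx'; rwa [Real.norm_eq_abs] at this
          exact mul_le_mul (pow_le_pow_left₀ (hWnn x hx') h1 _) h2 (abs_nonneg _)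
            (by positivity)
      have hWlow : (c * t) ^ (m-1) ≤ W t ^ (m-1) :=
        pow_le_pow_left₀ (by positivity) (hWlb t ht) _
      have hMnn : 0 ≤ M := le_trans (abs_nonneg _) (by
        have := hM 0 ⟨le_rfl, hSpos.le⟩; rwa [Real.norm_eq_abs] at this)
      rw [hFdef]
      simp only []
      rw [abs_div, abs_of_nonneg (pow_nonneg (hWnn t ⟨ht.1.le, ht.2⟩) _)]
      have hWpow : 0 < W t ^ (m-1) := pow_pos (hWpos t ht) _
      have step1 : |A k t| / W t ^ (m-1) ≤ ((L ^ (m-1) * M) * t ^ (m-1) * t) / ((c*t) ^ (m-1)) := by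
        apply div_le_div₀ (by positivity) hAbd (by positivity) hWlow
      refine le_trans step1 ?_
      rw [mul_pow]
      rw [div_le_iff₀ (by positivity)]
      have ht' : t ≤ S := ht.2
      have hcp : (0:ℝ) < c ^ (m-1) := by positivity
      have htp : (0:ℝ) < t ^ (m-1) := by positivity
      calc L ^ (m-1) * M * t ^ (m-1) * t
          = (L ^ (m-1) * M * t) * t ^ (m-1) := by ring
        _ ≤ (L ^ (m-1) * M * S) * t ^ (m-1) := by
            apply mul_le_mul_of_nonneg_right _ htp.le
            have : (0:ℝ) ≤ L ^ (m-1) * M := by positivity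
            nlinarith
        _ = L ^ (m-1) * M / c ^ (m-1) * S * (c ^ (m-1) * t ^ (m-1)) := by
            field_simp
    have hFS : IntervalIntegrable (F k) volume 0 S :=
      intervalIntegrable_of_bdd_cont hSpos.le hFcont hFbd
    have hFint : ∀ a b, 0 ≤ a → a ≤ b → b ≤ S → IntervalIntegrable (F k) volume a b := by
      intro a b ha hab hb
      apply hFS.mono_set
      rw [uIcc_of_le hab, uIcc_of_le hSpos.le]
      exact Icc_subset_Icc ha hb
    exact ⟨hFint, hFcont, hFpos, hFnn, hUint, hAcont, hApos⟩
  -- the main induction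
  have hQ : ∀ k : ℕ, ContinuousOn (uW k) (Icc 0 S) ∧ (∀ σ ∈ Ico (0:ℝ) S, 0 < uW k σ) ∧
      (∀ σ ∈ Icc (0:ℝ) S, 0 ≤ uW k σ) ∧ AntitoneOn (uW k) (Icc 0 S) := by
    intro k
    induction k with
    | zero =>
      have huW0' : uW 0 = fun _ => (1:ℝ) := funext huW0
      rw [huW0']
      exact ⟨continuousOn_const, fun σ _ => one_pos, fun σ _ => one_pos.le,
        fun a _ b _ _ => le_rfl⟩
    | succ k ih =>
      obtain ⟨qc, qpos, qnn, qanti⟩ := ih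
      obtain ⟨fint, fcont, fpos, fnn, -, -, -⟩ := hFfacts k qc qpos qnn qanti
      have hsplit : ∀ a b, 0 ≤ a → a ≤ b → b ≤ S →
          (∫ t in a..S, F k t) = (∫ t in a..b, F k t) + ∫ t in b..S, F k t :=
        fun a b ha hab hb => (intervalIntegral.integral_add_adjacent_intervals
          (fint a b ha hab hb) (fint b S (le_trans ha hab) hb le_rfl)).symm
      have hposint : ∀ a b, 0 ≤ a → a < b → b ≤ S → 0 < ∫ t in a..b, F k t := by
        intro a b ha hab hb
        apply intervalIntegral_pos_of_pos_on (fint a b ha hab.le hb)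
        · intro x hx
          exact fpos x ⟨lt_of_le_of_lt ha hx.1, le_trans hx.2.le hb⟩
        · exact hab
      have hnnint : ∀ a b, 0 ≤ a → a ≤ b → b ≤ S → 0 ≤ ∫ t in a..b, F k t := by
        intro a b ha hab hb
        apply intervalIntegral.integral_nonneg hab
        intro u hu
        exact fnn u ⟨le_trans ha hu.1, le_trans hu.2 hb⟩
      refine ⟨?_, ?_, ?_, ?_⟩
      · -- continuity
        have h1 : ContinuousOn (fun σ => ∫ t in σ..S, F k t) (Icc 0 S) := by
          have hio : IntegrableOn (F k) (uIcc 0 S) volume := by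
            rw [uIcc_of_le hSpos.le, integrableOn_Icc_iff_integrableOn_Ioc]
            exact (intervalIntegrable_iff_integrableOn_Ioc_of_le hSpos.le).mp
              (fint 0 S le_rfl hSpos.le le_rfl)
          have := intervalIntegral.continuousOn_primitive_interval_left hio
          rwa [uIcc_of_le hSpos.le] at this
        have heq : ∀ σ ∈ Icc (0:ℝ) S, uW (k+1) σ = ((k:ℝ)+1) * ∫ t in σ..S, F k t :=
          fun σ _ => hrec k σ
        exact (continuousOn_congr heq).mpr (h1.const_smul ((k:ℝ)+1))
      · -- positivity on Ico
        intro σ hσ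
        rw [hrec]
        have := hposint σ S hσ.1 hσ.2 le_rfl
        positivity
      · -- nonnegativity on Icc
        intro σ hσ
        rw [hrec]
        have := hnnint σ S hσ.1 hσ.2 le_rfl
        positivity
      · -- antitone
        intro σ1 h1 σ2 h2 h12
        rw [hrec, hrec]
        have hsp := hsplit σ1 σ2 h1.1 h12 h2.2
        have := hnnint σ1 σ2 h1.1 h12 h2.2
        exact mul_le_mul_of_nonneg_left (by linarith) (by positivity)
  have hF : ∀ k : ℕ,
      ((∀ a b, 0 ≤ a → a ≤ b → b ≤ S → IntervalIntegrable (F k) volume a b) ∧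
       ContinuousOn (F k) (Ioc 0 S) ∧
       (∀ t ∈ Ioc (0:ℝ) S, 0 < F k t) ∧
       (∀ t ∈ Icc (0:ℝ) S, 0 ≤ F k t) ∧
       (∀ a b, 0 ≤ a → a ≤ b → b ≤ S →
         IntervalIntegrable (fun τ => W τ ^ (m - 1) * uW k τ) volume a b) ∧
       ContinuousOn (A k) (Icc 0 S) ∧
       (∀ t ∈ Ioc (0:ℝ) S, 0 < A k t)) :=
    fun k => hFfacts k (hQ k).1 (hQ k).2.1 (hQ k).2.2.1 (hQ k).2.2.2
  -- strict antitonicity for k ≥ 1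
  have hstrict : ∀ k : ℕ, StrictAntiOn (uW (k+1)) (Icc 0 S) := by
    intro k σ1 h1 σ2 h2 h12
    obtain ⟨fint, fcont, fpos, fnn, -, -, -⟩ := hF k
    rw [hrec, hrec]
    have hsp : (∫ t in σ1..S, F k t) = (∫ t in σ1..σ2, F k t) + ∫ t in σ2..S, F k t :=
      (intervalIntegral.integral_add_adjacent_intervals
        (fint σ1 σ2 h1.1 h12.le h2.2) (fint σ2 S h2.1 h2.2 le_rfl)).symm
    have hpos : 0 < ∫ t in σ1..σ2, F k t := by
      apply intervalIntegral_pos_of_pos_on (fint σ1 σ2 h1.1 h12.le h2.2)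
      · intro x hx
        exact fpos x ⟨lt_of_le_of_lt h1.1 hx.1, le_trans hx.2.le h2.2⟩
      · exact h12
    have hk1 : (0:ℝ) < (k:ℝ)+1 := by positivity
    exact mul_lt_mul_of_pos_left (by linarith) hk1
  -- derivative of uW (k+1)
  have hUderiv : ∀ k : ℕ, ∀ σ ∈ Ioo (0:ℝ) S,
      HasDerivAt (uW (k+1)) (-(((k:ℝ)+1) * F k σ)) σ := by
    intro k σ hσ
    obtain ⟨fint, fcont, fpos, fnn, -, -, -⟩ := hF k
    have heq : uW (k+1) = fun x => ((k:ℝ)+1) * ∫ t in x..S, F k t := funext (hrec k)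
    rw [heq]
    have hd : HasDerivAt (fun x => ∫ t in x..S, F k t) (-(F k σ)) σ := by
      apply intervalIntegral.integral_hasDerivAt_left (fint σ S hσ.1.le hσ.2.le le_rfl)
      · exact AEStronglyMeasurable.stronglyMeasurableAtFilter_of_mem
          ((fcont.mono Ioo_subset_Ioc_self).aestronglyMeasurable measurableSet_Ioo)
          (Ioo_mem_nhds hσ.1 hσ.2)
      · exact fcont.continuousAt
          (mem_of_superset (Ioo_mem_nhds hσ.1 hσ.2) Ioo_subset_Ioc_self)
    have := hd.const_mul (((k:ℝ)+1))
    simpa [mul_comm] using this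
  -- derivative of A and F at interior points
  have hAderiv : ∀ k : ℕ, ∀ σ ∈ Ioo (0:ℝ) S,
      HasDerivAt (A k) (W σ ^ (m-1) * uW k σ) σ := by
    intro k σ hσ
    obtain ⟨-, -, -, -, uint, -, -⟩ := hF k
    rw [hAdef]
    apply intervalIntegral.integral_hasDerivAt_right (uint 0 σ le_rfl hσ.1.le hσ.2.le)
    · exact AEStronglyMeasurable.stronglyMeasurableAtFilter_of_mem
        ((((hWcont.pow _).mul (hQ k).1).mono
          (Icc_subset_Icc le_rfl le_rfl)).aestronglyMeasurable measurableSet_Icc)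
        (Icc_mem_nhds hσ.1 hσ.2)
    · exact ((hWcont.pow _).mul (hQ k).1).continuousAt (Icc_mem_nhds hσ.1 hσ.2)
  have hFderiv : ∀ k : ℕ, ∀ σ ∈ Ioo (0:ℝ) S,
      HasDerivAt (F k)
        ((W σ ^ (m-1) * uW k σ * W σ ^ (m-1) -
          A k σ * ((m-1 : ℕ) * W σ ^ (m-1-1) * deriv W σ)) / (W σ ^ (m-1)) ^ 2) σ := by
    intro k σ hσ
    have h1 := hAderiv k σ hσ
    have h2 : HasDerivAt (fun t => W t ^ (m-1)) ((m-1 : ℕ) * W σ ^ (m-1-1) * deriv W σ) σ :=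
      (hWdiff σ hσ).pow (m-1)
    have hne : W σ ^ (m-1) ≠ 0 := (pow_pos (hWpos σ ⟨hσ.1, hσ.2.le⟩) _).ne'
    exact h1.div h2 hne
  -- smooth data derivatives
  have hwd : ∀ x : ℝ, HasDerivAt w (deriv w x) x := fun x =>
    ((hw.differentiable (by simp)) x).hasDerivAt
  have hgd : ∀ x : ℝ, HasDerivAt g (deriv g x) x := fun x =>
    ((hg.differentiable (by simp)) x).hasDerivAt
  -- Λ equals (W ∘ s)^(m-1) on Ioc 0 R
  have hmne : (m:ℝ) - 1 ≠ 0 := by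
    have : (2:ℝ) ≤ (m:ℝ) := by exact_mod_cast hm
    linarith
  have hLeq : ∀ x ∈ Ioc (0:ℝ) R, Λ x = W (s x) ^ (m - 1) := by
    intro x hx
    have hsx := hsmem x hx
    rw [hWdef (s x) hsx, hρs x ⟨hx.1.le, hx.2⟩]
    rw [← Real.rpow_natCast (Λ x ^ (((m:ℝ)-1)⁻¹)) (m-1), ← Real.rpow_mul (hΛpos x hx).le]
    rw [hnR, inv_mul_cancel₀ hmne, Real.rpow_one]
  -- conversion of the balance integral
  have hA0 : ∀ σ : ℝ, (∫ t in (0:ℝ)..σ, W t ^ (m-1)) = A 0 σ := by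
    intro σ
    simp only [hAdef]
    apply intervalIntegral.integral_congr
    intro x hx
    simp [huW0]
  have hFv : ∀ (k:ℕ) (t:ℝ), F k t = A k t / W t ^ (m-1) := fun k t => rfl
  have hAv : ∀ (k:ℕ) (t:ℝ), A k t = ∫ τ in (0:ℝ)..t, W τ ^ (m-1) * uW k τ :=
    fun k t => rfl
  clear_value A F
  intro k hk
  obtain ⟨j, rfl⟩ : ∃ j, k = j + 1 := ⟨k - 1, by omega⟩
  -- the core identity
  have core : ∀ r ∈ Ioo (0:ℝ) R,
      deriv (deriv (f (j+1))) r - deriv (f (j+1)) r * (deriv w r / w r) =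
        (((j:ℝ)+1) / (g r)^2) *
          (F j (s r) * ((m:ℝ) * (deriv w r / w r - h r) / g r) - uW j (s r)) := by
    intro r hr
    have hσ : s r ∈ Ioo 0 S := hsmemo r hr
    have hgr : 0 < g r := hgpos r ⟨hr.1.le, hr.2.le⟩
    have hwr : 0 < w r := hwpos r ⟨hr.1, hr.2.le⟩
    have hWσ : 0 < W (s r) := hWpos (s r) ⟨hσ.1, hσ.2.le⟩
    have hsd : HasDerivAt s (g r)⁻¹ r := by simpa [one_div] using hsderiv r hr
    -- first derivative of f (j+1)
    have hfd : ∀ x ∈ Ioo (0:ℝ) R, HasDerivAt (f (j+1))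
        (-(((j:ℝ)+1) * F j (s x)) * (g x)⁻¹) x := by
      intro x hx
      have h1 := hUderiv j (s x) (hsmemo x hx)
      have h2 : HasDerivAt s (g x)⁻¹ x := by simpa [one_div] using hsderiv x hx
      have h3 := h1.comp x h2
      have hfeq : f (j+1) = fun y => uW (j+1) (s y) := funext (hf (j+1))
      rw [hfeq]
      simpa [Function.comp_def, mul_comm, mul_assoc, mul_left_comm] using h3
    have hdf1 : deriv (f (j+1)) r = -(((j:ℝ)+1) * F j (s r)) * (g r)⁻¹ := (hfd r hr).deriv
    have hdfev : deriv (f (j+1)) =ᶠ[nhds r]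
        fun x => -(((j:ℝ)+1) * F j (s x)) * (g x)⁻¹ := by
      filter_upwards [Ioo_mem_nhds hr.1 hr.2] with x hx
      exact (hfd x hx).deriv
    -- second derivative
    set D : ℝ := (W (s r) ^ (m-1) * uW j (s r) * W (s r) ^ (m-1) -
        A j (s r) * ((m-1 : ℕ) * W (s r) ^ (m-1-1) * deriv W (s r))) /
        (W (s r) ^ (m-1)) ^ 2 with hDdef
    have hFs : HasDerivAt (fun x => F j (s x)) (D * (g r)⁻¹) r := by
      have h4 := (hFderiv j (s r) hσ).comp r hsd
      simpa [Function.comp_def] using h4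
    clear_value D
    have hinv : HasDerivAt (fun x => (g x)⁻¹) (-(deriv g r) / (g r)^2) r :=
      (hgd r).inv hgr.ne'
    have hG : HasDerivAt (fun x => -(((j:ℝ)+1) * F j (s x)) * (g x)⁻¹)
        ((-(((j:ℝ)+1) * (D * (g r)⁻¹))) * (g r)⁻¹ +
         (-(((j:ℝ)+1) * F j (s r))) * (-(deriv g r) / (g r)^2)) r :=
      ((hFs.const_mul ((j:ℝ)+1)).neg).mul hinv
    have hdd : deriv (deriv (f (j+1))) r =
        (-(((j:ℝ)+1) * (D * (g r)⁻¹))) * (g r)⁻¹ +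
        (-(((j:ℝ)+1) * F j (s r))) * (-(deriv g r) / (g r)^2) := by
      rw [hdfev.deriv_eq]; exact hG.deriv
    -- the ODE identity
    have hΛat : HasDerivAt (fun t => Λ t * w t * g t)
        ((m:ℝ) * (Λ r / g r) * (deriv w r - h r * w r)) r :=
      (hΛode r ⟨hr.1, hr.2.le⟩).hasDerivAt
        (mem_of_superset (Ioo_mem_nhds hr.1 hr.2) Ioo_subset_Ioc_self)
    have hWsd : HasDerivAt (fun x => W (s x) ^ (m-1))
        ((m-1:ℕ) * W (s r) ^ (m-1-1) * (deriv W (s r) * (g r)⁻¹)) r := by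
      have h0 : HasDerivAt (fun x => W (s x)) (deriv W (s r) * (g r)⁻¹) r := by
        have h5 := (hWdiff (s r) hσ).comp r hsd
        simpa [Function.comp_def] using h5
      exact h0.pow (m-1)
    have hΛd : HasDerivAt Λ ((m-1:ℕ) * W (s r) ^ (m-1-1) * (deriv W (s r) * (g r)⁻¹)) r := by
      apply hWsd.congr_of_eventuallyEq
      filter_upwards [Ioo_mem_nhds hr.1 hr.2] with x hx
      exact hLeq x ⟨hx.1, hx.2.le⟩
    have hprod : HasDerivAt (fun t => Λ t * w t * g t)
        ((((m-1:ℕ) * W (s r) ^ (m-1-1) * (deriv W (s r) * (g r)⁻¹)) * w r +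
            Λ r * deriv w r) * g r + Λ r * w r * deriv g r) r :=
      (hΛd.mul (hwd r)).mul (hgd r)
    have hkey0 := hprod.unique hΛat
    have hΛr : Λ r = W (s r) ^ (m-1) := hLeq r ⟨hr.1, hr.2.le⟩
    rw [hΛr] at hkey0
    have hm2 : m - 1 - 1 = m - 2 := by omega
    have he1 : W (s r) ^ (m-1) = W (s r) ^ (m-2) * W (s r) := by
      rw [← pow_sub_one_mul hn0 (W (s r)), hm2]
    have hXpos : (0:ℝ) < W (s r) ^ (m-2) := pow_pos hWσ _
    rw [hm2, hnR, he1] at hkey0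
    have hkey1 : ((m:ℝ)-1) * W (s r) ^ (m-2) * deriv W (s r) * w r * g r +
        W (s r)^(m-2) * W (s r) * deriv w r * (g r)^2 +
        W (s r)^(m-2) * W (s r) * w r * deriv g r * g r =
        (m:ℝ) * (W (s r)^(m-2) * W (s r)) * (deriv w r - h r * w r) := by
      field_simp at hkey0
      linear_combination (W (s r))^(m-2) * hkey0
    have hkey2 : ((m:ℝ)-1) * deriv W (s r) * w r * g r +
        W (s r) * deriv w r * (g r)^2 + W (s r) * w r * deriv g r * g r =
        (m:ℝ) * W (s r) * (deriv w r - h r * w r) := by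
      have hmul : W (s r)^(m-2) * (((m:ℝ)-1) * deriv W (s r) * w r * g r +
          W (s r) * deriv w r * (g r)^2 + W (s r) * w r * deriv g r * g r) =
          W (s r)^(m-2) * ((m:ℝ) * W (s r) * (deriv w r - h r * w r)) := by
        linear_combination hkey1
      exact mul_left_cancel₀ hXpos.ne' hmul
    have key : ((m:ℝ)-1) * deriv W (s r) / W (s r) =
        (m:ℝ) * (deriv w r / w r - h r) / g r - (deriv w r / w r) * g r - deriv g r := by
      field_simp
      linear_combination hkey2
    have hD2 : D = uW j (s r) - (((m:ℝ)-1) * deriv W (s r) / W (s r)) * F j (s r) := by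
      rw [hDdef, hFv j (s r), hm2, hnR, he1]
      field_simp
    rw [hdd, hdf1, hD2, key]
    field_simp
    ring
  -- pointwise bounds
  have bound : ∀ r ∈ Ioo (0:ℝ) R,
      (uW j (s r) ≤ F j (s r) * ((m:ℝ) * (deriv w r / w r - h r) / g r)) ∧
      (1 ≤ j → uW j (s r) < F j (s r) * ((m:ℝ) * (deriv w r / w r - h r) / g r)) ∧
      ((∀ σ ∈ Ioc (0:ℝ) S,
          g (ρ σ) / (m : ℝ) <
            ((∫ t in (0 : ℝ)..σ, W t ^ (m - 1)) / W σ ^ (m - 1)) *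
              (deriv w (ρ σ) / w (ρ σ) - h (ρ σ))) →
        uW j (s r) < F j (s r) * ((m:ℝ) * (deriv w r / w r - h r) / g r)) := by
    intro r hr
    have hσ : s r ∈ Ioo 0 S := hsmemo r hr
    have hσS : s r ∈ Ioc 0 S := ⟨hσ.1, hσ.2.le⟩
    have hgr : 0 < g r := hgpos r ⟨hr.1.le, hr.2.le⟩
    have hwr : 0 < w r := hwpos r ⟨hr.1, hr.2.le⟩
    have hWσ : 0 < W (s r) := hWpos (s r) hσS
    have hWn : 0 < W (s r) ^ (m-1) := pow_pos hWσ _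
    have hmpos : (0:ℝ) < (m:ℝ) := by positivity
    have hρr : ρ (s r) = r := hρs r ⟨hr.1.le, hr.2.le⟩
    have hA0σ : 0 < A 0 (s r) := (hF 0).2.2.2.2.2.2 (s r) hσS
    have hAjσ : 0 < A j (s r) := (hF j).2.2.2.2.2.2 (s r) hσS
    have hujnn : 0 ≤ uW j (s r) := (hQ j).2.2.1 (s r) ⟨hσ.1.le, hσ.2.le⟩
    have hujpos : 0 < uW j (s r) := (hQ j).2.1 (s r) ⟨hσ.1.le, hσ.2⟩
    -- balance inequality at σ = s r
    have hbal' : g r / m ≤ (A 0 (s r) / W (s r) ^ (m-1)) * (deriv w r / w r - h r) := by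
      have := hbal (s r) hσS
      rwa [hρr, hA0 (s r)] at this
    have hqpos : 0 < A 0 (s r) / W (s r) ^ (m-1) := div_pos hA0σ hWn
    have hη : 0 < deriv w r / w r - h r := by
      by_contra hcon
      push_neg at hcon
      have h1 : (A 0 (s r) / W (s r) ^ (m-1)) * (deriv w r / w r - h r) ≤ 0 :=
        mul_nonpos_of_nonneg_of_nonpos hqpos.le hcon
      have h2 : 0 < g r / m := by positivity
      linarith
    have hQpos : 0 < (m:ℝ) * (deriv w r / w r - h r) / g r := by positivity
    -- 1 ≤ q * Q
    have h1qQ : 1 ≤ (A 0 (s r) / W (s r) ^ (m-1)) *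
        ((m:ℝ) * (deriv w r / w r - h r) / g r) := by
      have e : (g r / m) * ((m:ℝ) / g r) = 1 := by field_simp
      calc (1:ℝ) = (g r / m) * ((m:ℝ) / g r) := e.symm
        _ ≤ ((A 0 (s r) / W (s r) ^ (m-1)) * (deriv w r / w r - h r)) * ((m:ℝ) / g r) :=
            mul_le_mul_of_nonneg_right hbal' (by positivity)
        _ = (A 0 (s r) / W (s r) ^ (m-1)) * ((m:ℝ) * (deriv w r / w r - h r) / g r) := by
            ring
    -- integral comparison
    have hint0 : IntervalIntegrable (fun τ => W τ ^ (m-1) * uW 0 τ) volume 0 (s r) :=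
      (hF 0).2.2.2.2.1 0 (s r) le_rfl hσ.1.le hσ.2.le
    have hintj : IntervalIntegrable (fun τ => W τ ^ (m-1) * uW j τ) volume 0 (s r) :=
      (hF j).2.2.2.2.1 0 (s r) le_rfl hσ.1.le hσ.2.le
    have hAA : uW j (s r) * A 0 (s r) ≤ A j (s r) := by
      have he : uW j (s r) * A 0 (s r) =
          ∫ τ in (0:ℝ)..(s r), uW j (s r) * (W τ ^ (m-1) * uW 0 τ) := by
        rw [hAv 0 (s r)]
        exact (intervalIntegral.integral_const_mul _ _).symm
      rw [he, hAv j (s r)]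
      apply intervalIntegral.integral_mono_on hσ.1.le (hint0.const_mul _) hintj
      intro x hx
      have hx' : x ∈ Icc (0:ℝ) S := ⟨hx.1, le_trans hx.2 hσ.2.le⟩
      have hmono : uW j (s r) ≤ uW j x :=
        (hQ j).2.2.2 hx' ⟨hσ.1.le, hσ.2.le⟩ hx.2
      have hWxn : 0 ≤ W x ^ (m-1) := pow_nonneg (hWnn x hx') _
      rw [huW0, mul_one]
      calc uW j (s r) * W x ^ (m-1) ≤ uW j x * W x ^ (m-1) :=
            mul_le_mul_of_nonneg_right hmono hWxn
        _ = W x ^ (m-1) * uW j x := by ring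
    have huq : uW j (s r) * (A 0 (s r) / W (s r) ^ (m-1)) ≤ F j (s r) := by
      rw [hFv j (s r), ← mul_div_assoc]
      exact (div_le_div_iff_of_pos_right hWn).mpr hAA
    -- chains
    refine ⟨?_, ?_, ?_⟩
    · calc uW j (s r) = uW j (s r) * 1 := (mul_one _).symm
        _ ≤ uW j (s r) * ((A 0 (s r) / W (s r) ^ (m-1)) *
            ((m:ℝ) * (deriv w r / w r - h r) / g r)) :=
              mul_le_mul_of_nonneg_left h1qQ hujnn
        _ = (uW j (s r) * (A 0 (s r) / W (s r) ^ (m-1))) *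
            ((m:ℝ) * (deriv w r / w r - h r) / g r) := by ring
        _ ≤ F j (s r) * ((m:ℝ) * (deriv w r / w r - h r) / g r) :=
              mul_le_mul_of_nonneg_right huq hQpos.le
    · intro hj
      obtain ⟨j', rfl⟩ : ∃ j', j = j' + 1 := ⟨j - 1, by omega⟩
      have hAAs : uW (j'+1) (s r) * A 0 (s r) < A (j'+1) (s r) := by
        have hdint : IntervalIntegrable
            (fun τ => W τ ^ (m-1) * uW (j'+1) τ - uW (j'+1) (s r) * (W τ ^ (m-1) * uW 0 τ))
            volume 0 (s r) := hintj.sub (hint0.const_mul _)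
        have hdpos : 0 < ∫ τ in (0:ℝ)..(s r),
            (W τ ^ (m-1) * uW (j'+1) τ - uW (j'+1) (s r) * (W τ ^ (m-1) * uW 0 τ)) := by
          apply intervalIntegral_pos_of_pos_on hdint
          · intro x hx
            have hx' : x ∈ Icc (0:ℝ) S := ⟨hx.1.le, le_trans hx.2.le hσ.2.le⟩
            have hWx : 0 < W x := hWpos x ⟨hx.1, hx'.2⟩
            have hlt : uW (j'+1) (s r) < uW (j'+1) x :=
              hstrict j' hx' ⟨hσ.1.le, hσ.2.le⟩ hx.2
            rw [huW0, mul_one]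
            have : 0 < W x ^ (m-1) := pow_pos hWx _
            nlinarith
          · exact hσ.1
        have hsub : (∫ τ in (0:ℝ)..(s r),
            (W τ ^ (m-1) * uW (j'+1) τ - uW (j'+1) (s r) * (W τ ^ (m-1) * uW 0 τ))) =
            A (j'+1) (s r) - uW (j'+1) (s r) * A 0 (s r) := by
          rw [intervalIntegral.integral_sub hintj (hint0.const_mul _),
            intervalIntegral.integral_const_mul, ← hAv (j'+1) (s r), ← hAv 0 (s r)]
        rw [hsub] at hdpos
        linarith
      have huqs : uW (j'+1) (s r) * (A 0 (s r) / W (s r) ^ (m-1)) < F (j'+1) (s r) := by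
        rw [hFv (j'+1) (s r), ← mul_div_assoc]
        exact (div_lt_div_iff_of_pos_right hWn).mpr hAAs
      calc uW (j'+1) (s r) = uW (j'+1) (s r) * 1 := (mul_one _).symm
        _ ≤ uW (j'+1) (s r) * ((A 0 (s r) / W (s r) ^ (m-1)) *
            ((m:ℝ) * (deriv w r / w r - h r) / g r)) :=
              mul_le_mul_of_nonneg_left h1qQ hujnn
        _ = (uW (j'+1) (s r) * (A 0 (s r) / W (s r) ^ (m-1))) *
            ((m:ℝ) * (deriv w r / w r - h r) / g r) := by ring
        _ < F (j'+1) (s r) * ((m:ℝ) * (deriv w r / w r - h r) / g r) :=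
              mul_lt_mul_of_pos_right huqs hQpos
    · intro hsb
      have hbals : g r / m < (A 0 (s r) / W (s r) ^ (m-1)) * (deriv w r / w r - h r) := by
        have := hsb (s r) hσS
        rwa [hρr, hA0 (s r)] at this
      have h1qQs : 1 < (A 0 (s r) / W (s r) ^ (m-1)) *
          ((m:ℝ) * (deriv w r / w r - h r) / g r) := by
        have e : (g r / m) * ((m:ℝ) / g r) = 1 := by field_simp
        calc (1:ℝ) = (g r / m) * ((m:ℝ) / g r) := e.symm
          _ < ((A 0 (s r) / W (s r) ^ (m-1)) * (deriv w r / w r - h r)) * ((m:ℝ) / g r) :=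
              mul_lt_mul_of_pos_right hbals (by positivity)
          _ = (A 0 (s r) / W (s r) ^ (m-1)) *
              ((m:ℝ) * (deriv w r / w r - h r) / g r) := by ring
      calc uW j (s r) = uW j (s r) * 1 := (mul_one _).symm
        _ < uW j (s r) * ((A 0 (s r) / W (s r) ^ (m-1)) *
            ((m:ℝ) * (deriv w r / w r - h r) / g r)) :=
              mul_lt_mul_of_pos_left h1qQs hujpos
        _ = (uW j (s r) * (A 0 (s r) / W (s r) ^ (m-1))) *
            ((m:ℝ) * (deriv w r / w r - h r) / g r) := by ring
        _ ≤ F j (s r) * ((m:ℝ) * (deriv w r / w r - h r) / g r) :=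
              mul_le_mul_of_nonneg_right huq hQpos.le
  constructor
  · intro r hr
    rw [core r hr]
    have hle := (bound r hr).1
    have hgr : 0 < g r := hgpos r ⟨hr.1.le, hr.2.le⟩
    apply mul_nonneg (by positivity)
    linarith
  · intro hcase r hr
    rw [core r hr]
    have hgr : 0 < g r := hgpos r ⟨hr.1.le, hr.2.le⟩
    apply mul_pos (by positivity)
    have : uW j (s r) < F j (s r) * ((m:ℝ) * (deriv w r / w r - h r) / g r) := by
      rcases hcase with h2k | hsb
      · exact (bound r hr).2.1 (by omega)
      · exact (bound r hr).2.2 hsb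
    linarith
end

section
/- If the model C^m_{w,g,h} is w-balanced, i.e. q_W(σ)(η_w(r(σ)) − h(r(σ))) ≥ g(r(σ))/m for all σ ∈ (0, s(R)], then η_w(r) − h(r) > 0 for every r ∈ (0, R]. -/
/-- If the isoperimetric comparison space `C^m_{w,g,h}` is
`w`-balanced, i.e. `q_W(σ)(η_w(r(σ)) - h(r(σ))) ≥ g(r(σ))/m` for all
`σ ∈ (0, s(R)]`, then `η_w(r) - h(r) > 0` for every `r ∈ (0,R]`. -/
theorem balance_implies_eta_minus_h_positive
    (m : ℕ) (hm : 2 ≤ m) (R : ℝ) (hR : 0 < R)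
    (w : ℝ → ℝ) (hw : ContDiff ℝ (⊤ : ℕ∞) w) (hw0 : w 0 = 0)
    (hw'0 : deriv w 0 = 1) (hwpos : ∀ r ∈ Set.Ioc (0 : ℝ) R, 0 < w r)
    (g : ℝ → ℝ) (hg : ContDiff ℝ (⊤ : ℕ∞) g) (hg0 : g 0 = 1)
    (hgpos : ∀ r ∈ Set.Icc (0 : ℝ) R, 0 < g r)
    (hgle : ∀ r ∈ Set.Icc (0 : ℝ) R, g r ≤ 1)
    (h : ℝ → ℝ) (hh : ContDiff ℝ (⊤ : ℕ∞) h)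
    (s : ℝ → ℝ) (hs : ∀ r : ℝ, s r = ∫ t in (0 : ℝ)..r, 1 / g t)
    (ρ : ℝ → ℝ) (hρs : ∀ r ∈ Set.Icc (0 : ℝ) R, ρ (s r) = r)
    (hsρ : ∀ σ ∈ Set.Icc (0 : ℝ) (s R), s (ρ σ) = σ ∧ ρ σ ∈ Set.Icc (0 : ℝ) R)
    (Λ : ℝ → ℝ) (hΛpos : ∀ r ∈ Set.Ioc (0 : ℝ) R, 0 < Λ r)
    (hΛC1 : ContDiffOn ℝ 1 Λ (Set.Ioc (0 : ℝ) R))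
    (hΛode : ∀ r ∈ Set.Ioc (0 : ℝ) R,
      HasDerivWithinAt (fun t => Λ t * w t * g t)
        ((m : ℝ) * (Λ r / g r) * (deriv w r - h r * w r)) (Set.Ioc (0 : ℝ) R) r)
    (hΛnorm : Filter.Tendsto (fun r => Λ r / r ^ (m - 1))
      (nhdsWithin (0 : ℝ) (Set.Ioi 0)) (nhds 1))
    (W : ℝ → ℝ) (hW0 : W 0 = 0)
    (hWdef : ∀ σ ∈ Set.Ioc (0 : ℝ) (s R), W σ = Λ (ρ σ) ^ (((m : ℝ) - 1)⁻¹))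
    (hbal : ∀ σ ∈ Set.Ioc (0 : ℝ) (s R),
      g (ρ σ) / (m : ℝ) ≤
        ((∫ t in (0 : ℝ)..σ, W t ^ (m - 1)) / W σ ^ (m - 1)) *
          (deriv w (ρ σ) / w (ρ σ) - h (ρ σ))) :
    ∀ r ∈ Set.Ioc (0 : ℝ) R, 0 < deriv w r / w r - h r := by
  intro r hr
  have hr0 : 0 < r := hr.1
  have hrR : r ≤ R := hr.2
  have hint : ∀ a b, a ∈ Set.Icc (0:ℝ) R → b ∈ Set.Icc (0:ℝ) R →
      IntervalIntegrable (fun t => 1 / g t) MeasureTheory.volume a b := by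
    intro a b ha hb
    apply ContinuousOn.intervalIntegrable
    apply ContinuousOn.div continuousOn_const hg.continuous.continuousOn
    intro t ht
    have hsub : Set.uIcc a b ⊆ Set.Icc (0:ℝ) R := by
      rw [show Set.Icc (0:ℝ) R = Set.uIcc (0:ℝ) R from (Set.uIcc_of_le hR.le).symm]
      exact Set.uIcc_subset_uIcc (by rw [Set.uIcc_of_le hR.le]; exact ha)
        (by rw [Set.uIcc_of_le hR.le]; exact hb)
    exact (hgpos t (hsub ht)).ne'
  have hmem0 : (0:ℝ) ∈ Set.Icc (0:ℝ) R := ⟨le_refl 0, hR.le⟩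
  have hmemr : r ∈ Set.Icc (0:ℝ) R := ⟨hr0.le, hrR⟩
  have hmemR : R ∈ Set.Icc (0:ℝ) R := ⟨hR.le, le_refl R⟩
  have hsr_pos : 0 < s r := by
    rw [hs r]
    apply intervalIntegral.intervalIntegral_pos_of_pos_on (hint 0 r hmem0 hmemr)
    · intro t ht
      exact div_pos one_pos (hgpos t ⟨ht.1.le, ht.2.le.trans hrR⟩)
    · exact hr0
  have hsr_le : s r ≤ s R := by
    rw [hs r, hs R]
    rw [← intervalIntegral.integral_add_adjacent_intervals (hint 0 r hmem0 hmemr)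
      (hint r R hmemr hmemR)]
    have h2 : 0 ≤ ∫ t in r..R, 1 / g t := by
      apply intervalIntegral.integral_nonneg hrR
      intro t ht
      exact (div_pos one_pos (hgpos t ⟨hr0.le.trans ht.1, ht.2⟩)).le
    linarith
  have hρr : ρ (s r) = r := hρs r hmemr
  have hb := hbal (s r) ⟨hsr_pos, hsr_le⟩
  rw [hρr] at hb
  by_contra hcon
  push_neg at hcon
  have hWnn : ∀ t ∈ Set.Icc (0:ℝ) (s r), 0 ≤ W t ^ (m - 1) := by
    intro t ht
    apply pow_nonneg
    rcases eq_or_lt_of_le ht.1 with heq | hlt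
    · rw [← heq, hW0]
    · rw [hWdef t ⟨hlt, ht.2.trans hsr_le⟩]
      obtain ⟨hst, hρt⟩ := hsρ t ⟨hlt.le, ht.2.trans hsr_le⟩
      have hρtne : ρ t ≠ 0 := by
        intro hz
        rw [hz, hs 0, intervalIntegral.integral_same] at hst
        exact hlt.ne hst
      exact (Real.rpow_pos_of_pos (hΛpos _ ⟨hρt.1.lt_of_ne' hρtne, hρt.2⟩) _).le
  have hint_nn : 0 ≤ ∫ t in (0:ℝ)..(s r), W t ^ (m - 1) :=
    intervalIntegral.integral_nonneg hsr_pos.le hWnn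
  have hWσ : 0 < W (s r) ^ (m - 1) := by
    rw [hWdef (s r) ⟨hsr_pos, hsr_le⟩, hρr]
    exact pow_pos (Real.rpow_pos_of_pos (hΛpos r hr) _) _
  have hQ : 0 ≤ (∫ t in (0:ℝ)..(s r), W t ^ (m - 1)) / W (s r) ^ (m - 1) :=
    div_nonneg hint_nn hWσ.le
  have hneg : ((∫ t in (0:ℝ)..(s r), W t ^ (m - 1)) / W (s r) ^ (m - 1)) *
      (deriv w r / w r - h r) ≤ 0 := mul_nonpos_of_nonneg_of_nonpos hQ hcon
  have hgr : 0 < g r / (m:ℝ) :=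
    div_pos (hgpos r hmemr) (by positivity)
  linarith
end

section
/- The warping function W of the isoperimetric comparison space C^m_{w,g,h} satisfies lim_{σ→0+} W(σ)/σ = 1; together with W(0) = 0 and W > 0 on (0, s(R)], this shows that W'(0) = 1, so that C^m_{w,g,h} is a genuine model space with a well-defined pole at σ = 0. -/
/-- The warping function `W` of the isoperimetric comparison
space `C^m_{w,g,h}` satisfies `W(0) = 0`, `W > 0` on `(0, s(R)]` and
`lim_{σ→0+} W(σ)/σ = 1`; hence `W'(0) = 1` (one-sided derivative at the
center), so `C^m_{w,g,h}` is a genuine model space with pole at `σ = 0`. -/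
theorem comparison_space_is_model_space
    (m : ℕ) (hm : 2 ≤ m) (R : ℝ) (hR : 0 < R)
    (w : ℝ → ℝ) (hw : ContDiff ℝ (⊤ : ℕ∞) w) (hw0 : w 0 = 0)
    (hw'0 : deriv w 0 = 1) (hwpos : ∀ r ∈ Set.Ioc (0 : ℝ) R, 0 < w r)
    (g : ℝ → ℝ) (hg : ContDiff ℝ (⊤ : ℕ∞) g) (hg0 : g 0 = 1)
    (hgpos : ∀ r ∈ Set.Icc (0 : ℝ) R, 0 < g r)
    (hgle : ∀ r ∈ Set.Icc (0 : ℝ) R, g r ≤ 1)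
    (h : ℝ → ℝ) (hh : ContDiff ℝ (⊤ : ℕ∞) h)
    (s : ℝ → ℝ) (hs : ∀ r : ℝ, s r = ∫ t in (0 : ℝ)..r, 1 / g t)
    (ρ : ℝ → ℝ) (hρs : ∀ r ∈ Set.Icc (0 : ℝ) R, ρ (s r) = r)
    (hsρ : ∀ σ ∈ Set.Icc (0 : ℝ) (s R), s (ρ σ) = σ ∧ ρ σ ∈ Set.Icc (0 : ℝ) R)
    (Λ : ℝ → ℝ) (hΛpos : ∀ r ∈ Set.Ioc (0 : ℝ) R, 0 < Λ r)
    (hΛC1 : ContDiffOn ℝ 1 Λ (Set.Ioc (0 : ℝ) R))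
    (hΛode : ∀ r ∈ Set.Ioc (0 : ℝ) R,
      HasDerivWithinAt (fun t => Λ t * w t * g t)
        ((m : ℝ) * (Λ r / g r) * (deriv w r - h r * w r)) (Set.Ioc (0 : ℝ) R) r)
    (hΛnorm : Filter.Tendsto (fun r => Λ r / r ^ (m - 1))
      (nhdsWithin (0 : ℝ) (Set.Ioi 0)) (nhds 1))
    (W : ℝ → ℝ) (hW0 : W 0 = 0)
    (hWdef : ∀ σ ∈ Set.Ioc (0 : ℝ) (s R), W σ = Λ (ρ σ) ^ (((m : ℝ) - 1)⁻¹)) :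
    W 0 = 0 ∧
    (∀ σ ∈ Set.Ioc (0 : ℝ) (s R), 0 < W σ) ∧
    Filter.Tendsto (fun σ => W σ / σ) (nhdsWithin (0 : ℝ) (Set.Ioi 0)) (nhds 1) ∧
    HasDerivWithinAt W 1 (Set.Ici (0 : ℝ)) 0 := by
  have hm1 : (0:ℝ) < (m:ℝ) - 1 := by
    have : (2:ℝ) ≤ (m:ℝ) := by exact_mod_cast hm
    linarith
  set c : ℝ := ((m:ℝ) - 1)⁻¹ with hc
  -- s 0 = 0
  have hs0 : s 0 = 0 := by rw [hs]; simp
  -- r ≤ s r on [0,R]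
  have hsge : ∀ r ∈ Set.Icc (0:ℝ) R, r ≤ s r := by
    intro r hr
    rw [hs]
    have hcont : ContinuousOn (fun t => 1 / g t) (Set.Icc 0 r) := by
      apply ContinuousOn.div continuousOn_const (hg.continuous.continuousOn)
      intro t ht
      exact (hgpos t ⟨ht.1, le_trans ht.2 hr.2⟩).ne'
    have hint : IntervalIntegrable (fun t => 1 / g t) MeasureTheory.volume 0 r := by
      apply ContinuousOn.intervalIntegrable
      rwa [Set.uIcc_of_le hr.1]
    calc r = ∫ t in (0:ℝ)..r, (1:ℝ) := by simp
      _ ≤ ∫ t in (0:ℝ)..r, 1 / g t := by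
          apply intervalIntegral.integral_mono_on hr.1 intervalIntegrable_const hint
          intro t ht
          have h1 : 0 < g t := hgpos t ⟨ht.1, le_trans ht.2 hr.2⟩
          exact one_le_one_div h1 (hgle t ⟨ht.1, le_trans ht.2 hr.2⟩)
  have hsR : 0 < s R := lt_of_lt_of_le hR (hsge R ⟨le_of_lt hR, le_refl R⟩)
  -- properties of ρ on (0, s R]
  have hρmem : ∀ σ ∈ Set.Ioc (0:ℝ) (s R), ρ σ ∈ Set.Ioc 0 R ∧ ρ σ ≤ σ := by
    intro σ hσ
    obtain ⟨hsρσ, hρIcc⟩ := hsρ σ ⟨hσ.1.le, hσ.2⟩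
    have hne : ρ σ ≠ 0 := by
      intro h0
      rw [h0, hs0] at hsρσ
      exact hσ.1.ne' hsρσ.symm
    have hρpos : 0 < ρ σ := lt_of_le_of_ne hρIcc.1 (Ne.symm hne)
    refine ⟨⟨hρpos, hρIcc.2⟩, ?_⟩
    calc ρ σ ≤ s (ρ σ) := hsge _ hρIcc
      _ = σ := hsρσ
  -- positivity of W
  have hWpos : ∀ σ ∈ Set.Ioc (0:ℝ) (s R), 0 < W σ := by
    intro σ hσ
    rw [hWdef σ hσ]
    exact Real.rpow_pos_of_pos (hΛpos _ (hρmem σ hσ).1) _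
  -- eventually σ ∈ Ioc 0 (s R) along 𝓝[>]0
  have hev : ∀ᶠ σ in nhdsWithin (0:ℝ) (Set.Ioi 0), σ ∈ Set.Ioc (0:ℝ) (s R) := by
    filter_upwards [Ioo_mem_nhdsGT_of_mem (show (0:ℝ) ∈ Set.Ico 0 (s R) from ⟨le_refl _, hsR⟩)]
      with σ hσ
    exact ⟨hσ.1, hσ.2.le⟩
  -- Tendsto ρ (𝓝[>]0) (𝓝[>]0)
  have hρtend : Filter.Tendsto ρ (nhdsWithin (0:ℝ) (Set.Ioi 0))
      (nhdsWithin (0:ℝ) (Set.Ioi 0)) := by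
    rw [tendsto_nhdsWithin_iff]
    constructor
    · apply squeeze_zero' (g := id)
      · filter_upwards [hev] with σ hσ using (hρmem σ hσ).1.1.le
      · filter_upwards [hev] with σ hσ using (hρmem σ hσ).2
      · exact Filter.Tendsto.mono_left (Filter.tendsto_id) nhdsWithin_le_nhds
    · filter_upwards [hev] with σ hσ using (hρmem σ hσ).1.1
  -- limit A : Λ r ^ c / r → 1 along 𝓝[>]0
  have hA : Filter.Tendsto (fun r => Λ r ^ c / r) (nhdsWithin (0:ℝ) (Set.Ioi 0)) (nhds 1) := by
    have h1 : Filter.Tendsto (fun r => (Λ r / r ^ (m - 1)) ^ c)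
        (nhdsWithin (0:ℝ) (Set.Ioi 0)) (nhds 1) := by
      have := hΛnorm.rpow_const (p := c) (Or.inl one_ne_zero)
      simpa using this
    apply h1.congr'
    filter_upwards [Ioo_mem_nhdsGT_of_mem (show (0:ℝ) ∈ Set.Ico 0 R from ⟨le_refl _, hR⟩)]
      with r hr
    have hrpos : 0 < r := hr.1
    have hΛr : 0 < Λ r := hΛpos r ⟨hr.1, hr.2.le⟩
    have hcast : ((m - 1 : ℕ) : ℝ) = (m:ℝ) - 1 := by
      have : 1 ≤ m := le_trans one_le_two hm
      push_cast [Nat.cast_sub this]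
      ring
    rw [Real.div_rpow hΛr.le (pow_nonneg hrpos.le _)]
    congr 1
    rw [← Real.rpow_natCast r (m - 1), ← Real.rpow_mul hrpos.le, hcast,
      mul_inv_cancel₀ hm1.ne', Real.rpow_one]
  -- HasDerivAt s 1 0
  have hds : HasDerivAt s 1 0 := by
    have hU : IsOpen {x : ℝ | g x ≠ 0} := isOpen_ne_fun hg.continuous continuous_const
    have h0U : (0:ℝ) ∈ {x : ℝ | g x ≠ 0} := by simp [hg0]
    have hcont : ContinuousOn (fun t => 1 / g t) {x : ℝ | g x ≠ 0} :=
      ContinuousOn.div continuousOn_const hg.continuous.continuousOn (fun t ht => ht)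
    have := (intervalIntegral.integral_hasDerivAt_right
      (IntervalIntegrable.refl)
      (hcont.stronglyMeasurableAtFilter hU 0 h0U)
      ((hcont.continuousAt (hU.mem_nhds h0U))))
    simp only [hg0, div_one] at this
    have heq : s = fun u => ∫ t in (0:ℝ)..u, 1 / g t := funext hs
    rw [heq]
    exact this
  -- s r / r → 1 along 𝓝[>]0
  have hslope : Filter.Tendsto (fun r => s r / r) (nhdsWithin (0:ℝ) (Set.Ioi 0)) (nhds 1) := by
    have := hasDerivAt_iff_tendsto_slope.1 hds
    have h2 := this.mono_left (nhdsWithin_mono 0 (by intro x hx; exact ne_of_gt hx :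
      Set.Ioi (0:ℝ) ⊆ {(0:ℝ)}ᶜ))
    apply h2.congr
    intro r
    simp [slope_def_field, hs0, div_eq_mul_inv, mul_comm]
  -- r / s r → 1 along 𝓝[>]0
  have hinv : Filter.Tendsto (fun r => r / s r) (nhdsWithin (0:ℝ) (Set.Ioi 0)) (nhds 1) := by
    have := hslope.inv₀ one_ne_zero
    simp only [inv_div, inv_one] at this
    exact this
  -- B : ρ σ / σ → 1
  have hB : Filter.Tendsto (fun σ => ρ σ / σ) (nhdsWithin (0:ℝ) (Set.Ioi 0)) (nhds 1) := by
    have := hinv.comp hρtend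
    apply this.congr'
    filter_upwards [hev] with σ hσ
    have := (hsρ σ ⟨hσ.1.le, hσ.2⟩).1
    simp only [Function.comp_apply, this]
  -- main limit
  have hmain : Filter.Tendsto (fun σ => W σ / σ) (nhdsWithin (0:ℝ) (Set.Ioi 0)) (nhds 1) := by
    have hAρ : Filter.Tendsto (fun σ => Λ (ρ σ) ^ c / ρ σ)
        (nhdsWithin (0:ℝ) (Set.Ioi 0)) (nhds 1) := hA.comp hρtend
    have := hAρ.mul hB
    rw [mul_one] at this
    apply this.congr'
    filter_upwards [hev] with σ hσ
    have hρpos := (hρmem σ hσ).1.1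
    rw [hWdef σ hσ]
    field_simp
  refine ⟨hW0, hWpos, hmain, ?_⟩
  rw [hasDerivWithinAt_iff_tendsto_slope]
  have hset : Set.Ici (0:ℝ) \ {0} = Set.Ioi 0 := by
    ext x; simp [lt_iff_le_and_ne, eq_comm, and_comm]
  rw [hset]
  apply hmain.congr
  intro σ
  simp [slope_def_field, hW0, div_eq_mul_inv, mul_comm]
end
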